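/- arXiv:2307.04107 — 10 statements merged into one kernel-verified Lean document; each statement's English description precedes it below -/
import Mathlib

section
/- Let n be a natural number, m ≥ 1 a real number, p : Fin n → ℝ nonnegative, σ a permutation of Fin n, and C : Fin n → ℝ such that for every j, C(σ(j)) ≥ (1/m)·Σ_{i ≤ j} p(σ(i)). Then Σ_{j} p(j)·C(j) ≥ ((Σ_{j} p(j))² + Σ_{j} p(j)²)/(2m). -/
/-! Reindexing along `σ` reduces the claim to `Σ_j q_j · Σ_{i ≤ j} q_i ≥ ((Σ q)² + Σ q²) / 2`
for `q = p ∘ σ`, which is in fact an equality: the triangular double sum and its transpose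
together cover every pair `(i, j)` once and the diagonal twice. -/

open Finset

section TriangularSum

variable {ι R : Type*} [LinearOrder ι] [Fintype ι] [LocallyFiniteOrderBot ι]
  [LocallyFiniteOrderTop ι] [CommSemiring R]

lemma sum_Iic_add_sum_Ici (q : ι → R) (j : ι) :
    ∑ i ∈ Iic j, q i + ∑ i ∈ Ici j, q i = ∑ i, q i + q j := by
  have h_union : Iic j ∪ Ici j = univ := by ext; simp [le_total]
  have h_inter : Iic j ∩ Ici j = {j} := by ext; simp [le_antisymm_iff, and_comm]
  rw [← sum_union_inter, h_union, h_inter, sum_singleton]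

lemma sum_mul_sum_Iic_eq_sum_mul_sum_Ici (q : ι → R) :
    ∑ j, q j * ∑ i ∈ Iic j, q i = ∑ j, q j * ∑ i ∈ Ici j, q i := by
  simp_rw [mul_sum]
  rw [sum_comm' (t' := univ) (s' := fun i => Ici i) (by simp [and_comm])]
  simp_rw [mul_comm]

lemma two_mul_sum_mul_sum_Iic (q : ι → R) :
    2 * ∑ j, q j * ∑ i ∈ Iic j, q i = (∑ j, q j) ^ 2 + ∑ j, q j ^ 2 := by
  calc 2 * ∑ j, q j * ∑ i ∈ Iic j, q i
      = ∑ j, q j * (∑ i ∈ Iic j, q i + ∑ i ∈ Ici j, q i) := by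
        rw [two_mul]
        nth_rw 2 [sum_mul_sum_Iic_eq_sum_mul_sum_Ici]
        simp_rw [← sum_add_distrib, mul_add]
    _ = ∑ j, q j * (∑ i, q i + q j) := by simp_rw [sum_Iic_add_sum_Ici]
    _ = (∑ j, q j) ^ 2 + ∑ j, q j ^ 2 := by simp_rw [mul_add, sum_add_distrib, ← sum_mul, sq]

end TriangularSum

theorem lp_constraint_validity_general (n : ℕ) (m : ℝ)
    (p : Fin n → ℝ) (hp : ∀ j, 0 ≤ p j)
    (σ : Equiv.Perm (Fin n)) (C : Fin n → ℝ)
    (hC : ∀ j, C (σ j) ≥ (1 / m) * ∑ i ∈ Finset.Iic j, p (σ i)) :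
    ∑ j, p j * C j ≥ ((∑ j, p j) ^ 2 + ∑ j, (p j) ^ 2) / (2 * m) := by
  have h_identity := two_mul_sum_mul_sum_Iic (fun j => p (σ j))
  rw [Equiv.sum_comp σ p, Equiv.sum_comp σ (fun j => p j ^ 2)] at h_identity
  calc ∑ j, p j * C j = ∑ j, p (σ j) * C (σ j) := (Equiv.sum_comp σ _).symm
    _ ≥ ∑ j, p (σ j) * ((1 / m) * ∑ i ∈ Iic j, p (σ i)) :=
        sum_le_sum fun j _ => mul_le_mul_of_nonneg_left (hC j) (hp (σ j))
    _ = (2 * ∑ j, p (σ j) * ∑ i ∈ Iic j, p (σ i)) / (2 * m) := by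
        simp_rw [mul_left_comm _ (1 / m), ← mul_sum]
        ring
    _ = ((∑ j, p j) ^ 2 + ∑ j, (p j) ^ 2) / (2 * m) := by rw [h_identity]

/-- Validity of the LP constraints (1d)/(1e): if `p` is nonnegative, `σ` a permutation of
`Fin n`, and `C (σ j) ≥ (1/m)·Σ_{i ≤ j} p (σ i)` for every `j`, with `m ≥ 1`, then
`Σ_j p j · C j ≥ ((Σ_j p j)² + Σ_j (p j)²)/(2m)`. -/
theorem lp_constraint_validity (n : ℕ) (m : ℝ) (hm : 1 ≤ m)
    (p : Fin n → ℝ) (hp : ∀ j, 0 ≤ p j)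
    (σ : Equiv.Perm (Fin n)) (C : Fin n → ℝ)
    (hC : ∀ j, C (σ j) ≥ (1 / m) * ∑ i ∈ Finset.Iic j, p (σ i)) :
    ∑ j, p j * C j ≥ ((∑ j, p j) ^ 2 + ∑ j, (p j) ^ 2) / (2 * m) :=
  lp_constraint_validity_general n m p hp σ C hC
end

section
/- (Core inequality of Lemma 1-1.) Let w_k, w_p, B, B_p, H_p, L, L', R be real numbers with w_k > 0, w_p > 0, 0 < L' ≤ L, B_p ≤ B, H_p ≤ 0, w_p − B_p − H_p ≥ 0, and w_k/w_p ≤ R. Then w_k − B − (L/L')·(w_p − B_p − H_p) ≤ ((R−1)/R)·w_k. -/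
/-- Core inequality of Lemma 1-1. -/
theorem core_inequality_lemma_1_1
    (wk wp B Bp Hp L L' R : ℝ)
    (hwk : 0 < wk) (hwp : 0 < wp)
    (hL' : 0 < L') (hL : L' ≤ L)
    (hB : Bp ≤ B) (hHp : Hp ≤ 0)
    (hpos : 0 ≤ wp - Bp - Hp)
    (hR : wk / wp ≤ R) :
    wk - B - (L / L') * (wp - Bp - Hp) ≤ ((R - 1) / R) * wk := by
  have hR0 : 0 < R := lt_of_lt_of_le (div_pos hwk hwp) hR
  have h1 : (1 : ℝ) ≤ L / L' := (one_le_div hL').mpr hL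
  have h2 : wp - Bp - Hp ≤ (L / L') * (wp - Bp - Hp) := le_mul_of_one_le_left hpos h1
  have h3 : wk ≤ R * wp := (div_le_iff₀ hwp).mp hR
  have h4 : wk / R ≤ wp := (div_le_iff₀ hR0).mpr (by linarith)
  have h5 : ((R - 1) / R) * wk = wk - wk / R := by field_simp
  linarith
end

section
/- (β-term bound in the proof of Lemma 3, flow level.) Assume the flow-level dual data, and let a ∈ {0,1}. Suppose that for all i ∈ I and all k' with βI(i,k') > 0: r_ℓ ≤ κ·DI(k')/m for every ℓ ≤ k', DI(k)+DJ(k) ≤ 2·DI(k') for every k ≤ k', and DI(k')² ≤ 2m·FI(i,k'). Then Σ_{k=1}^n Σ_{i∈I} Σ_{k'=k}^n βI(i,k')·LI(i,k)·( a·max_{ℓ≤k} r_ℓ + χ·(DI(k)+DJ(k))/m ) ≤ 2(aκ + 2χ)·Σ_{i∈I} Σ_{k=1}^n βI(i,k)·FI(i,k). (The symmetric statement holds for the output-port variables βJ, LJ, DJ, FJ.) -/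
/-- β-term bound in the proof of Lemma 3 (flow level). -/
theorem flow_level_beta_term_bound
    -- flow-level dual data
    (n : ℕ) (hn : 1 ≤ n)
    (I J : Type*) [Fintype I] [Fintype J] [Nonempty I] [Nonempty J]
    (m κ χ : ℝ) (hm : 2 ≤ m) (hκ : 0 < κ) (hχ : 1 ≤ χ)
    (w r C Cstar α DI DJ : Fin n → ℝ)
    (βI LI FI : I → Fin n → ℝ) (βJ LJ FJ : J → Fin n → ℝ)
    (hw : ∀ k, 0 ≤ w k) (hr : ∀ k, 0 ≤ r k) (hC : ∀ k, 0 ≤ C k)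
    (hCstar : ∀ k, 0 ≤ Cstar k) (hα : ∀ k, 0 ≤ α k)
    (hβI : ∀ i k, 0 ≤ βI i k) (hβJ : ∀ j k, 0 ≤ βJ j k)
    (hLI : ∀ i k, 0 ≤ LI i k) (hLJ : ∀ j k, 0 ≤ LJ j k)
    (hDI : ∀ k, 0 ≤ DI k) (hDJ : ∀ k, 0 ≤ DJ k)
    (hFI : ∀ i k, 0 ≤ FI i k) (hFJ : ∀ j k, 0 ≤ FJ j k)
    (hDImono : Monotone DI) (hDJmono : Monotone DJ)
    (hcumI : ∀ i k, ∑ k' ∈ Finset.Iic k, LI i k' ≤ DI k)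
    (hcumJ : ∀ j k, ∑ k' ∈ Finset.Iic k, LJ j k' ≤ DJ k)
    (a : ℝ) (ha : a = 0 ∨ a = 1)
    -- hypotheses on β (Observation 1 parts (1)–(4) and Observation 2)
    (hB : ∀ i k', 0 < βI i k' →
      (∀ ℓ ≤ k', r ℓ ≤ κ * DI k' / m) ∧
      (∀ k ≤ k', DI k + DJ k ≤ 2 * DI k') ∧
      (DI k') ^ 2 ≤ 2 * m * FI i k') :
    ∑ k, ∑ i, ∑ k' ∈ Finset.Ici k, βI i k' * LI i k *
        (a * (Finset.Iic k).sup' Finset.nonempty_Iic r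
          + χ * (DI k + DJ k) / m)
      ≤ 2 * (a * κ + 2 * χ) * ∑ i, ∑ k, βI i k * FI i k := by
  have hm0 : (0:ℝ) < m := lt_of_lt_of_le two_pos hm
  have ha0 : 0 ≤ a := by rcases ha with h | h <;> simp [h]
  have hχ0 : (0:ℝ) ≤ χ := zero_le_one.trans hχ
  have hc : 0 ≤ a * κ + 2 * χ := by positivity
  set X : Fin n → ℝ := fun k =>
    a * (Finset.Iic k).sup' Finset.nonempty_Iic r + χ * (DI k + DJ k) / m with hX
  calc ∑ k, ∑ i, ∑ k' ∈ Finset.Ici k, βI i k' * LI i k * X k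
      = ∑ i, ∑ k, ∑ k' ∈ Finset.Ici k, βI i k' * LI i k * X k :=
        Finset.sum_comm
    _ = ∑ i, ∑ k', ∑ k ∈ Finset.Iic k', βI i k' * LI i k * X k := by
        refine Finset.sum_congr rfl fun i _ => ?_
        refine Finset.sum_comm' ?_
        intro k k'
        simp [Finset.mem_Ici, Finset.mem_Iic]
    _ ≤ ∑ i, ∑ k', 2 * (a * κ + 2 * χ) * (βI i k' * FI i k') := by
        refine Finset.sum_le_sum fun i _ => Finset.sum_le_sum fun k' _ => ?_
        rcases eq_or_lt_of_le (hβI i k') with hb | hb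
        · rw [← hb]
          simp
        obtain ⟨h1, h2, h3⟩ := hB i k' hb
        have hXb : ∀ k ∈ Finset.Iic k', X k ≤ (a * κ + 2 * χ) * DI k' / m := by
          intro k hk
          rw [Finset.mem_Iic] at hk
          have hsup : (Finset.Iic k).sup' Finset.nonempty_Iic r ≤ κ * DI k' / m := by
            refine Finset.sup'_le _ _ fun ℓ hℓ => ?_
            exact h1 ℓ (le_trans (Finset.mem_Iic.mp hℓ) hk)
          have h2' : χ * (DI k + DJ k) / m ≤ χ * (2 * DI k') / m := by
            gcongr
            exact h2 k hk
          have h1' : a * ((Finset.Iic k).sup' Finset.nonempty_Iic r)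
              ≤ a * (κ * DI k' / m) := by
            rcases ha with h | h
            · simp [h]
            · simpa [h] using hsup
          calc X k ≤ a * (κ * DI k' / m) + χ * (2 * DI k') / m :=
                add_le_add h1' h2'
            _ = (a * κ + 2 * χ) * DI k' / m := by ring
        calc ∑ k ∈ Finset.Iic k', βI i k' * LI i k * X k
            ≤ ∑ k ∈ Finset.Iic k', βI i k' * LI i k * ((a * κ + 2 * χ) * DI k' / m) := by
              refine Finset.sum_le_sum fun k hk => ?_
              have := hXb k hk
              have hnn : 0 ≤ βI i k' * LI i k := mul_nonneg (hβI i k') (hLI i k)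
              exact mul_le_mul_of_nonneg_left this hnn
          _ = βI i k' * ((a * κ + 2 * χ) * DI k' / m) * ∑ k ∈ Finset.Iic k', LI i k := by
              rw [Finset.mul_sum]; refine Finset.sum_congr rfl fun k _ => by ring
          _ ≤ βI i k' * ((a * κ + 2 * χ) * DI k' / m) * DI k' := by
              have hnn : 0 ≤ βI i k' * ((a * κ + 2 * χ) * DI k' / m) :=
                mul_nonneg (hβI i k') (div_nonneg (mul_nonneg hc (hDI k')) hm0.le)
              exact mul_le_mul_of_nonneg_left (hcumI i k') hnn
          _ = βI i k' * (a * κ + 2 * χ) * ((DI k') ^ 2 / m) := by ring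
          _ ≤ βI i k' * (a * κ + 2 * χ) * (2 * m * FI i k' / m) := by
              gcongr
          _ = 2 * (a * κ + 2 * χ) * (βI i k' * FI i k') := by
              field_simp
    _ = 2 * (a * κ + 2 * χ) * ∑ i, ∑ k, βI i k * FI i k := by
        rw [Finset.mul_sum]; refine Finset.sum_congr rfl fun i _ => ?_
        rw [Finset.mul_sum]
end

section
/- (β-term bound in the proof of Lemma 23, coflow level.) Assume the coflow-level dual data, and let a ∈ {0,1}. Suppose that for all i ∈ I and all k' with βI(i,k') > 0: r_ℓ ≤ κ·DI(k')/m for every ℓ ≤ k', DI(k)+DJ(k) ≤ 2·DI(k') for every k ≤ k', and DI(k')² ≤ 2m·FI(i,k'). Then Σ_{k=1}^n Σ_{i∈I} Σ_{k'=k}^n βI(i,k')·LI(i,k)·( a·max_{ℓ≤k} r_ℓ + χ·(DI(k)+DJ(k)) ) ≤ 2(aκ + 2χ·m)·Σ_{i∈I} Σ_{k=1}^n βI(i,k)·FI(i,k). (The symmetric statement holds for the output-port variables βJ, LJ, DJ, FJ.) -/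
lemma triangle_swap {n : ℕ} (g : Fin n → Fin n → ℝ) :
    ∑ k, ∑ k' ∈ Finset.Ici k, g k k' = ∑ k', ∑ k ∈ Finset.Iic k', g k k' := by
  rw [Finset.sum_sigma', Finset.sum_sigma']
  apply Finset.sum_nbij' (fun p => ⟨p.2, p.1⟩) (fun p => ⟨p.2, p.1⟩) <;>
    simp [Finset.mem_sigma, Finset.mem_Ici, Finset.mem_Iic]

/-- β-term bound in the proof of Lemma 23 (coflow level). -/
theorem coflow_level_beta_term_bound
    -- coflow-level dual data
    (n : ℕ) (hn : 1 ≤ n)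
    (I J : Type*) [Fintype I] [Fintype J] [Nonempty I] [Nonempty J]
    (m κ χ : ℝ) (hm : 2 ≤ m) (hκ : 0 < κ) (hχ : 1 ≤ χ)
    (w r C α DI DJ : Fin n → ℝ)
    (βI LI FI : I → Fin n → ℝ) (βJ LJ FJ : J → Fin n → ℝ)
    (hw : ∀ k, 0 ≤ w k) (hr : ∀ k, 0 ≤ r k) (hC : ∀ k, 0 ≤ C k)
    (hα : ∀ k, 0 ≤ α k)
    (hβI : ∀ i k, 0 ≤ βI i k) (hβJ : ∀ j k, 0 ≤ βJ j k)
    (hLI : ∀ i k, 0 ≤ LI i k) (hLJ : ∀ j k, 0 ≤ LJ j k)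
    (hDI : ∀ k, 0 ≤ DI k) (hDJ : ∀ k, 0 ≤ DJ k)
    (hFI : ∀ i k, 0 ≤ FI i k) (hFJ : ∀ j k, 0 ≤ FJ j k)
    (hDImono : Monotone DI) (hDJmono : Monotone DJ)
    (hcumI : ∀ i k, ∑ k' ∈ Finset.Iic k, LI i k' ≤ DI k)
    (hcumJ : ∀ j k, ∑ k' ∈ Finset.Iic k, LJ j k' ≤ DJ k)
    (a : ℝ) (ha : a = 0 ∨ a = 1)
    -- hypotheses on β (Observation 3 parts (1)–(4) and Observation 4)
    (hB : ∀ i k', 0 < βI i k' →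
      (∀ ℓ ≤ k', r ℓ ≤ κ * DI k' / m) ∧
      (∀ k ≤ k', DI k + DJ k ≤ 2 * DI k') ∧
      (DI k') ^ 2 ≤ 2 * m * FI i k') :
    ∑ k, ∑ i, ∑ k' ∈ Finset.Ici k, βI i k' * LI i k *
        (a * (Finset.Iic k).sup' Finset.nonempty_Iic r
          + χ * (DI k + DJ k))
      ≤ 2 * (a * κ + 2 * χ * m) * ∑ i, ∑ k, βI i k * FI i k := by
  have hm0 : (0:ℝ) < m := lt_of_lt_of_le two_pos hm
  have ha0 : 0 ≤ a := by rcases ha with h | h <;> simp [h]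
  have hχ0 : (0:ℝ) ≤ χ := zero_le_one.trans hχ
  rw [Finset.sum_comm]
  have key : ∀ i k', ∑ k ∈ Finset.Iic k', βI i k' * LI i k *
      (a * (Finset.Iic k).sup' Finset.nonempty_Iic r + χ * (DI k + DJ k))
      ≤ 2 * (a * κ + 2 * χ * m) * (βI i k' * FI i k') := by
    intro i k'
    rcases eq_or_lt_of_le (hβI i k') with hz | hpos
    · simp [← hz]
    · obtain ⟨h1, h2, h3⟩ := hB i k' hpos
      have step1 : ∑ k ∈ Finset.Iic k', βI i k' * LI i k *
          (a * (Finset.Iic k).sup' Finset.nonempty_Iic r + χ * (DI k + DJ k))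
          ≤ ∑ k ∈ Finset.Iic k', (βI i k' * (a * (κ * DI k' / m) + χ * (2 * DI k'))) * LI i k := by
        apply Finset.sum_le_sum
        intro k hk
        have hk' : k ≤ k' := Finset.mem_Iic.mp hk
        have hsup : (Finset.Iic k).sup' Finset.nonempty_Iic r ≤ κ * DI k' / m := by
          apply Finset.sup'_le
          intro ℓ hℓ
          exact h1 ℓ ((Finset.mem_Iic.mp hℓ).trans hk')
        have hb : a * (Finset.Iic k).sup' Finset.nonempty_Iic r + χ * (DI k + DJ k)
            ≤ a * (κ * DI k' / m) + χ * (2 * DI k') :=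
          add_le_add (mul_le_mul_of_nonneg_left hsup ha0)
            (mul_le_mul_of_nonneg_left (h2 k hk') hχ0)
        calc βI i k' * LI i k * (a * (Finset.Iic k).sup' Finset.nonempty_Iic r + χ * (DI k + DJ k))
            ≤ βI i k' * LI i k * (a * (κ * DI k' / m) + χ * (2 * DI k')) :=
              mul_le_mul_of_nonneg_left hb (mul_nonneg (hβI i k') (hLI i k))
          _ = (βI i k' * (a * (κ * DI k' / m) + χ * (2 * DI k'))) * LI i k := by ring
      have hcnn : 0 ≤ βI i k' * (a * (κ * DI k' / m) + χ * (2 * DI k')) := by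
        have := hDI k'
        positivity
      have step2 : ∑ k ∈ Finset.Iic k', (βI i k' * (a * (κ * DI k' / m) + χ * (2 * DI k'))) * LI i k
          ≤ (βI i k' * (a * (κ * DI k' / m) + χ * (2 * DI k'))) * DI k' := by
        rw [← Finset.mul_sum]
        exact mul_le_mul_of_nonneg_left (hcumI i k') hcnn
      have step3 : (βI i k' * (a * (κ * DI k' / m) + χ * (2 * DI k'))) * DI k'
          ≤ 2 * (a * κ + 2 * χ * m) * (βI i k' * FI i k') := by
        have heq : (βI i k' * (a * (κ * DI k' / m) + χ * (2 * DI k'))) * DI k'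
            = βI i k' * (a * κ / m + 2 * χ) * (DI k') ^ 2 := by
          field_simp
        have hc2 : 0 ≤ βI i k' * (a * κ / m + 2 * χ) := by positivity
        calc (βI i k' * (a * (κ * DI k' / m) + χ * (2 * DI k'))) * DI k'
            = βI i k' * (a * κ / m + 2 * χ) * (DI k') ^ 2 := heq
          _ ≤ βI i k' * (a * κ / m + 2 * χ) * (2 * m * FI i k') :=
              mul_le_mul_of_nonneg_left h3 hc2
          _ = 2 * (a * κ + 2 * χ * m) * (βI i k' * FI i k') := by
              field_simp
      exact step1.trans (step2.trans step3)
  calc ∑ i, ∑ k, ∑ k' ∈ Finset.Ici k, βI i k' * LI i k *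
        (a * (Finset.Iic k).sup' Finset.nonempty_Iic r + χ * (DI k + DJ k))
      = ∑ i, ∑ k', ∑ k ∈ Finset.Iic k', βI i k' * LI i k *
        (a * (Finset.Iic k).sup' Finset.nonempty_Iic r + χ * (DI k + DJ k)) := by
        refine Finset.sum_congr rfl fun i _ => ?_
        exact triangle_swap _
    _ ≤ ∑ i, ∑ k', 2 * (a * κ + 2 * χ * m) * (βI i k' * FI i k') :=
        Finset.sum_le_sum fun i _ => Finset.sum_le_sum fun k' _ => key i k'
    _ = 2 * (a * κ + 2 * χ * m) * ∑ i, ∑ k, βI i k * FI i k := by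
        rw [Finset.mul_sum]
        exact Finset.sum_congr rfl fun i _ => (Finset.mul_sum _ _ _).symm
end

section
/- (Lemma 3, flow-level total-cost bound.) Assume the flow-level dual data and let a ∈ {0,1}. Assume: (A) for every k with α_k > 0: DI(k) ≤ m·r_k/κ, DJ(k) ≤ m·r_k/κ, and r_{k'} ≤ r_k for every k' ≤ k; (B) for all i ∈ I and k' with βI(i,k') > 0: r_ℓ ≤ κ·DI(k')/m for every ℓ ≤ k', DI(k)+DJ(k) ≤ 2·DI(k') for every k ≤ k', and DI(k')² ≤ 2m·FI(i,k'), and symmetrically for all j ∈ J and k' with βJ(j,k') > 0: r_ℓ ≤ κ·DJ(k')/m for every ℓ ≤ k', DI(k)+DJ(k) ≤ 2·DJ(k') for every k ≤ k', and DJ(k')² ≤ 2m·FJ(j,k'); (C) C_k ≤ a·max_{k'≤k} r_{k'} + χ·(DI(k)+DJ(k))/m + (1−2/m)·C*_k for every k; (D) w_k = α_k + Σ_{i∈I} Σ_{k'=k}^n βI(i,k')·LI(i,k) + Σ_{j∈J} Σ_{k'=k}^n βJ(j,k')·LJ(j,k) for every k. Then Σ_k w_k·C_k ≤ (a + 2χ/κ)·Σ_k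 α_k·r_k + 2(aκ + 2χ)·( Σ_{i∈I} Σ_k βI(i,k)·FI(i,k) + Σ_{j∈J} Σ_k βJ(j,k)·FJ(j,k) ) + (1 − 2/m)·OPT. -/
/-!
Weight each coflow's completion-time bound by the tight dual constraint (D). After exchanging
the order of summation, the right-hand side splits into an `α`-part and one part per port dual
`β(i, k')`, the latter collecting the loads `L(i, k)` of the coflows `k ≤ k'`. Whenever
`α_k > 0`, Observation 1 bounds the release/load part of the Lemma 1 bound on `C_k` by a multiple
of `r_k`; whenever `β(i, k') > 0`, Observation 2 bounds it for all `k ≤ k'` by a multiple of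
`D(k') / m`, so the `β`-part is at most a multiple of `D(k')² / m ≤ 2 F(i, k')`.
-/

open Finset

theorem mul_le_mul_of_nonneg_of_pos_imp {R : Type*} [Semiring R] [PartialOrder R] [PosMulMono R]
    {β x y : R} (hβ : 0 ≤ β) (h : 0 < β → x ≤ y) : β * x ≤ β * y := by
  rcases hβ.eq_or_lt with hβ0 | hβpos
  · simp [← hβ0]
  · exact mul_le_mul_of_nonneg_left (h hβpos) hβ

theorem sum_mul_le_of_pos_imp {ι R : Type*} [Fintype ι] [CommSemiring R] [PartialOrder R]
    [IsOrderedRing R] (α T r : ι → R) (c : R) (hα : ∀ k, 0 ≤ α k)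
    (h : ∀ k, 0 < α k → T k ≤ c * r k) :
    ∑ k, α k * T k ≤ c * ∑ k, α k * r k := by
  rw [mul_sum]
  refine sum_le_sum fun k _ => ?_
  rw [mul_left_comm]
  exact mul_le_mul_of_nonneg_of_pos_imp (hα k) (h k)

section

variable {ι : Type*} [Preorder ι] [LocallyFiniteOrderBot ι]

theorem sum_sum_Ici_comm [Fintype ι] [LocallyFiniteOrderTop ι] {M : Type*} [AddCommMonoid M]
    (f : ι → ι → M) :
    ∑ k, ∑ k' ∈ Ici k, f k k' = ∑ k', ∑ k ∈ Iic k', f k k' :=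
  sum_comm' fun _ _ => by simp only [mem_univ, mem_Ici, mem_Iic, and_true, true_and]

/-- The part of the Lemma 1 bound on `C k` that does not involve the optimal schedule. -/
noncomputable def releaseLoadBound (a χ m : ℝ) (r DI DJ : ι → ℝ) (k : ι) : ℝ :=
  a * (Iic k).sup' nonempty_Iic r + χ * (DI k + DJ k) / m

theorem releaseLoadBound_le_of_alpha {a χ m κ : ℝ} {r DI DJ : ι → ℝ} {k : ι}
    (ha : 0 ≤ a) (hχ : 0 ≤ χ) (hm : 0 < m) (hκ : 0 < κ)
    (hDI : DI k ≤ m * r k / κ) (hDJ : DJ k ≤ m * r k / κ) (hr : ∀ k' ≤ k, r k' ≤ r k) :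
    releaseLoadBound a χ m r DI DJ k ≤ (a + 2 * χ / κ) * r k := by
  have hmax : (Iic k).sup' nonempty_Iic r ≤ r k :=
    sup'_le _ _ fun k' hk' => hr k' (mem_Iic.mp hk')
  have hload : χ * (DI k + DJ k) / m ≤ 2 * χ / κ * r k := by
    calc χ * (DI k + DJ k) / m ≤ χ * (2 * (m * r k / κ)) / m := by gcongr; linarith
      _ = 2 * χ / κ * r k := by field_simp
  calc releaseLoadBound a χ m r DI DJ k ≤ a * r k + 2 * χ / κ * r k := by
        unfold releaseLoadBound; gcongr
    _ = (a + 2 * χ / κ) * r k := by ring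

theorem releaseLoadBound_le_of_port {a χ m κ D : ℝ} {r DI DJ : ι → ℝ} {k' : ι}
    (ha : 0 ≤ a) (hχ : 0 ≤ χ) (hm : 0 ≤ m)
    (hr : ∀ ℓ ≤ k', r ℓ ≤ κ * D / m) (hD : ∀ k ≤ k', DI k + DJ k ≤ 2 * D) :
    ∀ k ≤ k', releaseLoadBound a χ m r DI DJ k ≤ (a * κ + 2 * χ) * D / m := by
  intro k hk
  have hmax : (Iic k).sup' nonempty_Iic r ≤ κ * D / m :=
    sup'_le _ _ fun ℓ hℓ => hr ℓ ((mem_Iic.mp hℓ).trans hk)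
  calc releaseLoadBound a χ m r DI DJ k ≤ a * (κ * D / m) + χ * (2 * D) / m := by
        unfold releaseLoadBound; gcongr; exact hD k hk
    _ = (a * κ + 2 * χ) * D / m := by ring

theorem sum_Iic_load_mul_le {L T : ι → ℝ} {k' : ι} {c m D F : ℝ}
    (hm : 0 < m) (hc : 0 ≤ c) (hD : 0 ≤ D) (hL : ∀ k, 0 ≤ L k)
    (hcum : ∑ k ∈ Iic k', L k ≤ D) (hT : ∀ k ≤ k', T k ≤ c * D / m)
    (hF : D ^ 2 ≤ 2 * m * F) :
    ∑ k ∈ Iic k', L k * T k ≤ 2 * c * F :=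
  calc ∑ k ∈ Iic k', L k * T k ≤ ∑ k ∈ Iic k', L k * (c * D / m) :=
        sum_le_sum fun k hk => mul_le_mul_of_nonneg_left (hT k (mem_Iic.mp hk)) (hL k)
    _ = (∑ k ∈ Iic k', L k) * (c * D / m) := by rw [sum_mul]
    _ ≤ D * (c * D / m) := by gcongr
    _ = c * (D ^ 2 / m) := by ring
    _ ≤ c * (2 * F) := by gcongr; rw [div_le_iff₀ hm]; linarith
    _ = 2 * c * F := by ring

theorem sum_port_dual_load_mul_le [Fintype ι] [LocallyFiniteOrderTop ι] {P : Type*} [Fintype P]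
    (β L F : P → ι → ℝ) (D T : ι → ℝ) {c m : ℝ}
    (hm : 0 < m) (hc : 0 ≤ c) (hβ : ∀ i k, 0 ≤ β i k) (hL : ∀ i k, 0 ≤ L i k)
    (hD : ∀ k, 0 ≤ D k) (hcum : ∀ i k, ∑ k' ∈ Iic k, L i k' ≤ D k)
    (hT : ∀ i k', 0 < β i k' → ∀ k ≤ k', T k ≤ c * D k' / m)
    (hF : ∀ i k', 0 < β i k' → D k' ^ 2 ≤ 2 * m * F i k') :
    ∑ k, (∑ i, ∑ k' ∈ Ici k, β i k' * L i k) * T k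
      ≤ 2 * c * ∑ i, ∑ k, β i k * F i k := by
  have hswap : ∑ k, (∑ i, ∑ k' ∈ Ici k, β i k' * L i k) * T k
      = ∑ i, ∑ k', β i k' * ∑ k ∈ Iic k', L i k * T k := by
    simp only [sum_mul, mul_sum]
    rw [sum_comm]
    refine sum_congr rfl fun i _ => ?_
    rw [sum_sum_Ici_comm]
    exact sum_congr rfl fun k' _ => sum_congr rfl fun k _ => by ring
  rw [hswap, mul_sum]
  refine sum_le_sum fun i _ => ?_
  rw [mul_sum]
  refine sum_le_sum fun k' _ => ?_
  rw [mul_left_comm]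
  exact mul_le_mul_of_nonneg_of_pos_imp (hβ i k') fun hpos =>
    sum_Iic_load_mul_le hm hc (hD k') (hL i) (hcum i k') (hT i k' hpos) (hF i k' hpos)

end

theorem flow_level_total_cost_bound_general
    -- flow-level dual data
    (n : ℕ)
    (I J : Type*) [Fintype I] [Fintype J]
    (m κ χ : ℝ) (hm : 2 ≤ m) (hκ : 0 < κ) (hχ : 1 ≤ χ)
    (w r C Cstar α DI DJ : Fin n → ℝ)
    (βI LI FI : I → Fin n → ℝ) (βJ LJ FJ : J → Fin n → ℝ)
    (hw : ∀ k, 0 ≤ w k) (hα : ∀ k, 0 ≤ α k)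
    (hβI : ∀ i k, 0 ≤ βI i k) (hβJ : ∀ j k, 0 ≤ βJ j k)
    (hLI : ∀ i k, 0 ≤ LI i k) (hLJ : ∀ j k, 0 ≤ LJ j k)
    (hDI : ∀ k, 0 ≤ DI k) (hDJ : ∀ k, 0 ≤ DJ k)
    (hcumI : ∀ i k, ∑ k' ∈ Finset.Iic k, LI i k' ≤ DI k)
    (hcumJ : ∀ j k, ∑ k' ∈ Finset.Iic k, LJ j k' ≤ DJ k)
    (a : ℝ) (ha : a = 0 ∨ a = 1)
    -- (A) Observation 1 parts (5)–(7)
    (hA : ∀ k, 0 < α k →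
      DI k ≤ m * r k / κ ∧ DJ k ≤ m * r k / κ ∧ ∀ k' ≤ k, r k' ≤ r k)
    -- (B) Observation 1 parts (1)–(4) and Observation 2
    (hBI : ∀ i k', 0 < βI i k' →
      (∀ ℓ ≤ k', r ℓ ≤ κ * DI k' / m) ∧
      (∀ k ≤ k', DI k + DJ k ≤ 2 * DI k') ∧
      (DI k') ^ 2 ≤ 2 * m * FI i k')
    (hBJ : ∀ j k', 0 < βJ j k' →
      (∀ ℓ ≤ k', r ℓ ≤ κ * DJ k' / m) ∧
      (∀ k ≤ k', DI k + DJ k ≤ 2 * DJ k') ∧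
      (DJ k') ^ 2 ≤ 2 * m * FJ j k')
    -- (C) completion-time bound of Lemma 1
    (hCb : ∀ k, C k ≤ a * (Finset.Iic k).sup' Finset.nonempty_Iic r
        + χ * (DI k + DJ k) / m + (1 - 2 / m) * Cstar k)
    -- (D) tightness of the dual constraints
    (hD : ∀ k, w k = α k
        + ∑ i, ∑ k' ∈ Finset.Ici k, βI i k' * LI i k
        + ∑ j, ∑ k' ∈ Finset.Ici k, βJ j k' * LJ j k) :
    ∑ k, w k * C k
      ≤ (a + 2 * χ / κ) * ∑ k, α k * r k
        + 2 * (a * κ + 2 * χ) *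
            (∑ i, ∑ k, βI i k * FI i k + ∑ j, ∑ k, βJ j k * FJ j k)
        + (1 - 2 / m) * ∑ k, w k * Cstar k := by
  have hm0 : 0 < m := by linarith
  have ha0 : 0 ≤ a := by rcases ha with rfl | rfl <;> norm_num
  have hχ0 : 0 ≤ χ := by linarith
  have hc : 0 ≤ a * κ + 2 * χ := by positivity
  set T := releaseLoadBound a χ m r DI DJ
  have hCT : ∑ k, w k * C k ≤ ∑ k, w k * T k + (1 - 2 / m) * ∑ k, w k * Cstar k := by
    rw [mul_sum, ← sum_add_distrib]
    refine sum_le_sum fun k _ => ?_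
    have := mul_le_mul_of_nonneg_left (hCb k) (hw k)
    simp only [T, releaseLoadBound]
    linarith
  have hsplit : ∑ k, w k * T k = ∑ k, α k * T k
      + ∑ k, (∑ i, ∑ k' ∈ Ici k, βI i k' * LI i k) * T k
      + ∑ k, (∑ j, ∑ k' ∈ Ici k, βJ j k' * LJ j k) * T k := by
    simp only [hD, add_mul, sum_add_distrib]
  have hαT := sum_mul_le_of_pos_imp α T r _ hα fun k hk =>
    let ⟨hDIk, hDJk, hrk⟩ := hA k hk
    releaseLoadBound_le_of_alpha ha0 hχ0 hm0 hκ hDIk hDJk hrk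
  have hIT := sum_port_dual_load_mul_le βI LI FI DI T hm0 hc hβI hLI hDI hcumI
    (fun i k' hk' => let ⟨hrk, hDk, _⟩ := hBI i k' hk'
      releaseLoadBound_le_of_port ha0 hχ0 hm0.le hrk hDk)
    fun i k' hk' => (hBI i k' hk').2.2
  have hJT := sum_port_dual_load_mul_le βJ LJ FJ DJ T hm0 hc hβJ hLJ hDJ hcumJ
    (fun j k' hk' => let ⟨hrk, hDk, _⟩ := hBJ j k' hk'
      releaseLoadBound_le_of_port ha0 hχ0 hm0.le hrk hDk)
    fun j k' hk' => (hBJ j k' hk').2.2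
  linarith

/-- Lemma 3 (flow-level total-cost bound). -/
theorem flow_level_total_cost_bound
    -- flow-level dual data
    (n : ℕ) (hn : 1 ≤ n)
    (I J : Type*) [Fintype I] [Fintype J] [Nonempty I] [Nonempty J]
    (m κ χ : ℝ) (hm : 2 ≤ m) (hκ : 0 < κ) (hχ : 1 ≤ χ)
    (w r C Cstar α DI DJ : Fin n → ℝ)
    (βI LI FI : I → Fin n → ℝ) (βJ LJ FJ : J → Fin n → ℝ)
    (hw : ∀ k, 0 ≤ w k) (hr : ∀ k, 0 ≤ r k) (hC : ∀ k, 0 ≤ C k)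
    (hCstar : ∀ k, 0 ≤ Cstar k) (hα : ∀ k, 0 ≤ α k)
    (hβI : ∀ i k, 0 ≤ βI i k) (hβJ : ∀ j k, 0 ≤ βJ j k)
    (hLI : ∀ i k, 0 ≤ LI i k) (hLJ : ∀ j k, 0 ≤ LJ j k)
    (hDI : ∀ k, 0 ≤ DI k) (hDJ : ∀ k, 0 ≤ DJ k)
    (hFI : ∀ i k, 0 ≤ FI i k) (hFJ : ∀ j k, 0 ≤ FJ j k)
    (hDImono : Monotone DI) (hDJmono : Monotone DJ)
    (hcumI : ∀ i k, ∑ k' ∈ Finset.Iic k, LI i k' ≤ DI k)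
    (hcumJ : ∀ j k, ∑ k' ∈ Finset.Iic k, LJ j k' ≤ DJ k)
    (a : ℝ) (ha : a = 0 ∨ a = 1)
    -- (A) Observation 1 parts (5)–(7)
    (hA : ∀ k, 0 < α k →
      DI k ≤ m * r k / κ ∧ DJ k ≤ m * r k / κ ∧ ∀ k' ≤ k, r k' ≤ r k)
    -- (B) Observation 1 parts (1)–(4) and Observation 2
    (hBI : ∀ i k', 0 < βI i k' →
      (∀ ℓ ≤ k', r ℓ ≤ κ * DI k' / m) ∧
      (∀ k ≤ k', DI k + DJ k ≤ 2 * DI k') ∧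
      (DI k') ^ 2 ≤ 2 * m * FI i k')
    (hBJ : ∀ j k', 0 < βJ j k' →
      (∀ ℓ ≤ k', r ℓ ≤ κ * DJ k' / m) ∧
      (∀ k ≤ k', DI k + DJ k ≤ 2 * DJ k') ∧
      (DJ k') ^ 2 ≤ 2 * m * FJ j k')
    -- (C) completion-time bound of Lemma 1
    (hCb : ∀ k, C k ≤ a * (Finset.Iic k).sup' Finset.nonempty_Iic r
        + χ * (DI k + DJ k) / m + (1 - 2 / m) * Cstar k)
    -- (D) tightness of the dual constraints
    (hD : ∀ k, w k = α k
        + ∑ i, ∑ k' ∈ Finset.Ici k, βI i k' * LI i k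
        + ∑ j, ∑ k' ∈ Finset.Ici k, βJ j k' * LJ j k) :
    ∑ k, w k * C k
      ≤ (a + 2 * χ / κ) * ∑ k, α k * r k
        + 2 * (a * κ + 2 * χ) *
            (∑ i, ∑ k, βI i k * FI i k + ∑ j, ∑ k, βJ j k * FJ j k)
        + (1 - 2 / m) * ∑ k, w k * Cstar k :=
  flow_level_total_cost_bound_general n I J m κ χ hm hκ hχ w r C Cstar α DI DJ βI LI FI βJ LJ FJ hw
    hα hβI hβJ hLI hLJ hDI hDJ hcumI hcumJ a ha hA hBI hBJ hCb hD
end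

section
/- (Lemma 3-1, flow-level total-cost bound with weight ratio R.) Assume the flow-level dual data, let a ∈ {0,1} and R ≥ 1. Assume hypotheses (A), (B), (C) exactly as in Lemma 3, and replace (D) by (D_R): w_k ≤ R·( α_k + Σ_{i∈I} Σ_{k'=k}^n βI(i,k')·LI(i,k) + Σ_{j∈J} Σ_{k'=k}^n βJ(j,k')·LJ(j,k) ) for every k. Then Σ_k w_k·C_k ≤ R·(a + 2χ/κ)·Σ_k α_k·r_k + 2R·(aκ + 2χ)·( Σ_{i∈I} Σ_k βI(i,k)·FI(i,k) + Σ_{j∈J} Σ_k βJ(j,k)·FJ(j,k) ) + (1 − 2/m)·OPT. -/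
lemma sum_Ici_swap {n : ℕ} (f : Fin n → Fin n → ℝ) :
    ∑ k, ∑ k' ∈ Finset.Ici k, f k k' = ∑ k', ∑ k ∈ Finset.Iic k', f k k' :=
  Finset.sum_comm' (by simp [Finset.mem_Ici, Finset.mem_Iic, and_comm])

lemma beta_sum_bound {n : ℕ} {ι : Type*} [Fintype ι]
    (T : Fin n → ℝ) (β L G : ι → Fin n → ℝ) (D : Fin n → ℝ)
    (c : ℝ) (hc : 0 ≤ c)
    (hβ : ∀ i k, 0 ≤ β i k)
    (hL : ∀ i k, 0 ≤ L i k) (hD : ∀ k, 0 ≤ D k)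
    (hTb : ∀ i k', 0 < β i k' → ∀ k ≤ k', T k ≤ c * D k')
    (hcum : ∀ i k, ∑ k' ∈ Finset.Iic k, L i k' ≤ D k)
    (hG : ∀ i k', 0 < β i k' → D k' * (c * D k') ≤ G i k') :
    ∑ k, (∑ i, ∑ k' ∈ Finset.Ici k, β i k' * L i k) * T k
      ≤ ∑ i, ∑ k', β i k' * G i k' := by
  have key : ∑ k, (∑ i, ∑ k' ∈ Finset.Ici k, β i k' * L i k) * T k
      = ∑ i, ∑ k', ∑ k ∈ Finset.Iic k', β i k' * L i k * T k := by
    simp only [Finset.sum_mul]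
    rw [Finset.sum_comm]
    congr 1
    funext i
    exact sum_Ici_swap (fun k k' => β i k' * L i k * T k)
  rw [key]
  refine Finset.sum_le_sum fun i _ => Finset.sum_le_sum fun k' _ => ?_
  rcases (hβ i k').eq_or_lt with hb | hb
  · simp [← hb]
  · have hcD : 0 ≤ c * D k' := mul_nonneg hc (hD k')
    calc ∑ k ∈ Finset.Iic k', β i k' * L i k * T k
        = β i k' * ∑ k ∈ Finset.Iic k', L i k * T k := by
          rw [Finset.mul_sum]; congr 1; funext k; ring
      _ ≤ β i k' * (D k' * (c * D k')) := by
          refine mul_le_mul_of_nonneg_left ?_ hb.le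
          calc ∑ k ∈ Finset.Iic k', L i k * T k
              ≤ ∑ k ∈ Finset.Iic k', L i k * (c * D k') := by
                refine Finset.sum_le_sum fun k hk => ?_
                exact mul_le_mul_of_nonneg_left
                  (hTb i k' hb k (Finset.mem_Iic.mp hk)) (hL i k)
            _ = (∑ k ∈ Finset.Iic k', L i k) * (c * D k') := by
                rw [Finset.sum_mul]
            _ ≤ D k' * (c * D k') :=
                mul_le_mul_of_nonneg_right (hcum i k') hcD
      _ ≤ β i k' * G i k' := mul_le_mul_of_nonneg_left (hG i k' hb) hb.le

set_option maxHeartbeats 1000000 in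
/-- Lemma 3-1 (flow-level total-cost bound with weight ratio R). -/
theorem flow_level_total_cost_bound_ratio
    -- flow-level dual data
    (n : ℕ) (hn : 1 ≤ n)
    (I J : Type*) [Fintype I] [Fintype J] [Nonempty I] [Nonempty J]
    (m κ χ : ℝ) (hm : 2 ≤ m) (hκ : 0 < κ) (hχ : 1 ≤ χ)
    (w r C Cstar α DI DJ : Fin n → ℝ)
    (βI LI FI : I → Fin n → ℝ) (βJ LJ FJ : J → Fin n → ℝ)
    (hw : ∀ k, 0 ≤ w k) (hr : ∀ k, 0 ≤ r k) (hC : ∀ k, 0 ≤ C k)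
    (hCstar : ∀ k, 0 ≤ Cstar k) (hα : ∀ k, 0 ≤ α k)
    (hβI : ∀ i k, 0 ≤ βI i k) (hβJ : ∀ j k, 0 ≤ βJ j k)
    (hLI : ∀ i k, 0 ≤ LI i k) (hLJ : ∀ j k, 0 ≤ LJ j k)
    (hDI : ∀ k, 0 ≤ DI k) (hDJ : ∀ k, 0 ≤ DJ k)
    (hFI : ∀ i k, 0 ≤ FI i k) (hFJ : ∀ j k, 0 ≤ FJ j k)
    (hDImono : Monotone DI) (hDJmono : Monotone DJ)
    (hcumI : ∀ i k, ∑ k' ∈ Finset.Iic k, LI i k' ≤ DI k)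
    (hcumJ : ∀ j k, ∑ k' ∈ Finset.Iic k, LJ j k' ≤ DJ k)
    (a R : ℝ) (ha : a = 0 ∨ a = 1) (hR : 1 ≤ R)
    -- (A) Observation 1 parts (5)–(7)
    (hA : ∀ k, 0 < α k →
      DI k ≤ m * r k / κ ∧ DJ k ≤ m * r k / κ ∧ ∀ k' ≤ k, r k' ≤ r k)
    -- (B) Observation 1 parts (1)–(4) and Observation 2
    (hBI : ∀ i k', 0 < βI i k' →
      (∀ ℓ ≤ k', r ℓ ≤ κ * DI k' / m) ∧
      (∀ k ≤ k', DI k + DJ k ≤ 2 * DI k') ∧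
      (DI k') ^ 2 ≤ 2 * m * FI i k')
    (hBJ : ∀ j k', 0 < βJ j k' →
      (∀ ℓ ≤ k', r ℓ ≤ κ * DJ k' / m) ∧
      (∀ k ≤ k', DI k + DJ k ≤ 2 * DJ k') ∧
      (DJ k') ^ 2 ≤ 2 * m * FJ j k')
    -- (C) completion-time bound of Lemma 1
    (hCb : ∀ k, C k ≤ a * (Finset.Iic k).sup' Finset.nonempty_Iic r
        + χ * (DI k + DJ k) / m + (1 - 2 / m) * Cstar k)
    -- (D_R) relaxed tightness, Lemma 1-1
    (hDR : ∀ k, w k ≤ R * (α k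
        + ∑ i, ∑ k' ∈ Finset.Ici k, βI i k' * LI i k
        + ∑ j, ∑ k' ∈ Finset.Ici k, βJ j k' * LJ j k)) :
    ∑ k, w k * C k
      ≤ R * (a + 2 * χ / κ) * ∑ k, α k * r k
        + 2 * R * (a * κ + 2 * χ) *
            (∑ i, ∑ k, βI i k * FI i k + ∑ j, ∑ k, βJ j k * FJ j k)
        + (1 - 2 / m) * ∑ k, w k * Cstar k := by
  classical
  have hm0 : (0:ℝ) < m := by linarith
  have ha0 : 0 ≤ a := by rcases ha with h | h <;> rw [h] <;> norm_num
  have hχ0 : (0:ℝ) < χ := by linarith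
  have hR0 : (0:ℝ) ≤ R := by linarith
  set T : Fin n → ℝ := fun k =>
    a * (Finset.Iic k).sup' Finset.nonempty_Iic r + χ * (DI k + DJ k) / m
    with hTdef
  have hsup : ∀ k : Fin n, 0 ≤ (Finset.Iic k).sup' Finset.nonempty_Iic r :=
    fun k => le_trans (hr k) (Finset.le_sup' r (Finset.mem_Iic.mpr le_rfl))
  have hT0 : ∀ k, 0 ≤ T k := by
    intro k
    have h1 : 0 ≤ χ * (DI k + DJ k) / m :=
      div_nonneg (mul_nonneg hχ0.le (by linarith [hDI k, hDJ k])) hm0.le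
    have h2 : 0 ≤ a * (Finset.Iic k).sup' Finset.nonempty_Iic r :=
      mul_nonneg ha0 (hsup k)
    simp only [hTdef]; linarith
  -- Step 1
  have step1 : ∑ k, w k * C k
      ≤ ∑ k, w k * T k + (1 - 2 / m) * ∑ k, w k * Cstar k := by
    rw [Finset.mul_sum, ← Finset.sum_add_distrib]
    refine Finset.sum_le_sum fun k _ => ?_
    have h := mul_le_mul_of_nonneg_left (hCb k) (hw k)
    have e : w k * (a * (Finset.Iic k).sup' Finset.nonempty_Iic r
        + χ * (DI k + DJ k) / m + (1 - 2 / m) * Cstar k)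
        = w k * T k + (1 - 2 / m) * (w k * Cstar k) := by
      simp only [hTdef]; ring
    rw [e] at h; linarith
  -- Step 2: apply (D_R)
  have step2 : ∑ k, w k * T k
      ≤ R * ∑ k, (α k
        + ∑ i, ∑ k' ∈ Finset.Ici k, βI i k' * LI i k
        + ∑ j, ∑ k' ∈ Finset.Ici k, βJ j k' * LJ j k) * T k := by
    rw [Finset.mul_sum]
    refine Finset.sum_le_sum fun k _ => ?_
    have h := mul_le_mul_of_nonneg_right (hDR k) (hT0 k)
    rw [mul_assoc] at h
    exact h
  -- split the big sum
  have split : ∑ k, (α k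
        + ∑ i, ∑ k' ∈ Finset.Ici k, βI i k' * LI i k
        + ∑ j, ∑ k' ∈ Finset.Ici k, βJ j k' * LJ j k) * T k
      = ∑ k, α k * T k
        + ∑ k, (∑ i, ∑ k' ∈ Finset.Ici k, βI i k' * LI i k) * T k
        + ∑ k, (∑ j, ∑ k' ∈ Finset.Ici k, βJ j k' * LJ j k) * T k := by
    rw [← Finset.sum_add_distrib, ← Finset.sum_add_distrib]
    congr 1; funext k; ring
  -- α bound
  have stepα : ∑ k, α k * T k ≤ (a + 2 * χ / κ) * ∑ k, α k * r k := by
    rw [Finset.mul_sum]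
    refine Finset.sum_le_sum fun k _ => ?_
    rcases (hα k).eq_or_lt with h | h
    · rw [← h]; ring_nf; simp
    · obtain ⟨h1, h2, h3⟩ := hA k h
      have hs : (Finset.Iic k).sup' Finset.nonempty_Iic r ≤ r k :=
        Finset.sup'_le _ _ fun ℓ hℓ => h3 ℓ (Finset.mem_Iic.mp hℓ)
      have hTle : T k ≤ (a + 2 * χ / κ) * r k := by
        have e : a * r k + χ * (2 * (m * r k / κ)) / m
            = (a + 2 * χ / κ) * r k := by field_simp
        have hb : χ * (DI k + DJ k) / m ≤ χ * (2 * (m * r k / κ)) / m := by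
          apply div_le_div_of_nonneg_right ?_ hm0.le
          · exact mul_le_mul_of_nonneg_left (by linarith) hχ0.le
        have hb2 : a * (Finset.Iic k).sup' Finset.nonempty_Iic r ≤ a * r k :=
          mul_le_mul_of_nonneg_left hs ha0
        have hh := add_le_add hb2 hb
        rw [e] at hh
        simp only [hTdef]; linarith
      calc α k * T k ≤ α k * ((a + 2 * χ / κ) * r k) :=
            mul_le_mul_of_nonneg_left hTle h.le
        _ = (a + 2 * χ / κ) * (α k * r k) := by ring
  -- β bounds via helper
  set c : ℝ := (a * κ + 2 * χ) / m with hcdef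
  have hc0 : 0 ≤ c := div_nonneg (by nlinarith) hm0.le
  have stepβI : ∑ k, (∑ i, ∑ k' ∈ Finset.Ici k, βI i k' * LI i k) * T k
      ≤ ∑ i, ∑ k', βI i k' * (2 * (a * κ + 2 * χ) * FI i k') := by
    refine beta_sum_bound T βI LI _ DI c hc0 hβI hLI hDI ?_ hcumI ?_
    · intro i k' hb k hk
      obtain ⟨h1, h2, h3⟩ := hBI i k' hb
      have hs : (Finset.Iic k).sup' Finset.nonempty_Iic r ≤ κ * DI k' / m :=
        Finset.sup'_le _ _ fun ℓ hℓ => h1 ℓ (le_trans (Finset.mem_Iic.mp hℓ) hk)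
      have hsum : DI k + DJ k ≤ 2 * DI k' := h2 k hk
      have e : a * (κ * DI k' / m) + χ * (2 * DI k') / m = c * DI k' := by
        rw [hcdef]; field_simp
      have hb1 : a * (Finset.Iic k).sup' Finset.nonempty_Iic r
          ≤ a * (κ * DI k' / m) := mul_le_mul_of_nonneg_left hs ha0
      have hb2 : χ * (DI k + DJ k) / m ≤ χ * (2 * DI k') / m := by
        apply div_le_div_of_nonneg_right ?_ hm0.le
        · exact mul_le_mul_of_nonneg_left hsum hχ0.le
      have hh := add_le_add hb1 hb2
      rw [e] at hh
      simp only [hTdef]; linarith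
    · intro i k' hb
      obtain ⟨h1, h2, h3⟩ := hBI i k' hb
      have : DI k' * (c * DI k') = c * DI k' ^ 2 := by ring
      rw [this, hcdef]
      rw [div_mul_eq_mul_div, div_le_iff₀ hm0]
      nlinarith [mul_le_mul_of_nonneg_left h3 (by nlinarith : (0:ℝ) ≤ a * κ + 2 * χ)]
  have stepβJ : ∑ k, (∑ j, ∑ k' ∈ Finset.Ici k, βJ j k' * LJ j k) * T k
      ≤ ∑ j, ∑ k', βJ j k' * (2 * (a * κ + 2 * χ) * FJ j k') := by
    refine beta_sum_bound T βJ LJ _ DJ c hc0 hβJ hLJ hDJ ?_ hcumJ ?_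
    · intro j k' hb k hk
      obtain ⟨h1, h2, h3⟩ := hBJ j k' hb
      have hs : (Finset.Iic k).sup' Finset.nonempty_Iic r ≤ κ * DJ k' / m :=
        Finset.sup'_le _ _ fun ℓ hℓ => h1 ℓ (le_trans (Finset.mem_Iic.mp hℓ) hk)
      have hsum : DI k + DJ k ≤ 2 * DJ k' := h2 k hk
      have e : a * (κ * DJ k' / m) + χ * (2 * DJ k') / m = c * DJ k' := by
        rw [hcdef]; field_simp
      have hb1 : a * (Finset.Iic k).sup' Finset.nonempty_Iic r
          ≤ a * (κ * DJ k' / m) := mul_le_mul_of_nonneg_left hs ha0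
      have hb2 : χ * (DI k + DJ k) / m ≤ χ * (2 * DJ k') / m := by
        apply div_le_div_of_nonneg_right ?_ hm0.le
        · exact mul_le_mul_of_nonneg_left hsum hχ0.le
      have hh := add_le_add hb1 hb2
      rw [e] at hh
      simp only [hTdef]; linarith
    · intro j k' hb
      obtain ⟨h1, h2, h3⟩ := hBJ j k' hb
      have : DJ k' * (c * DJ k') = c * DJ k' ^ 2 := by ring
      rw [this, hcdef]
      rw [div_mul_eq_mul_div, div_le_iff₀ hm0]
      nlinarith [mul_le_mul_of_nonneg_left h3 (by nlinarith : (0:ℝ) ≤ a * κ + 2 * χ)]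
  -- rewrite β RHS
  have eβI : ∑ i, ∑ k', βI i k' * (2 * (a * κ + 2 * χ) * FI i k')
      = 2 * (a * κ + 2 * χ) * ∑ i, ∑ k, βI i k * FI i k := by
    rw [Finset.mul_sum]; congr 1; funext i
    rw [Finset.mul_sum]; congr 1; funext k; ring
  have eβJ : ∑ j, ∑ k', βJ j k' * (2 * (a * κ + 2 * χ) * FJ j k')
      = 2 * (a * κ + 2 * χ) * ∑ j, ∑ k, βJ j k * FJ j k := by
    rw [Finset.mul_sum]; congr 1; funext j
    rw [Finset.mul_sum]; congr 1; funext k; ring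
  rw [eβI] at stepβI
  rw [eβJ] at stepβJ
  -- assemble
  have hfinal : ∑ k, (α k
        + ∑ i, ∑ k' ∈ Finset.Ici k, βI i k' * LI i k
        + ∑ j, ∑ k' ∈ Finset.Ici k, βJ j k' * LJ j k) * T k
      ≤ (a + 2 * χ / κ) * ∑ k, α k * r k
        + 2 * (a * κ + 2 * χ) *
          (∑ i, ∑ k, βI i k * FI i k + ∑ j, ∑ k, βJ j k * FJ j k) := by
    rw [split]; linarith
  have := mul_le_mul_of_nonneg_left hfinal hR0
  calc ∑ k, w k * C k
      ≤ ∑ k, w k * T k + (1 - 2 / m) * ∑ k, w k * Cstar k := step1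
    _ ≤ R * ((a + 2 * χ / κ) * ∑ k, α k * r k
          + 2 * (a * κ + 2 * χ) *
            (∑ i, ∑ k, βI i k * FI i k + ∑ j, ∑ k, βJ j k * FJ j k))
          + (1 - 2 / m) * ∑ k, w k * Cstar k := by linarith
    _ = R * (a + 2 * χ / κ) * ∑ k, α k * r k
          + 2 * R * (a * κ + 2 * χ) *
            (∑ i, ∑ k, βI i k * FI i k + ∑ j, ∑ k, βJ j k * FJ j k)
          + (1 - 2 / m) * ∑ k, w k * Cstar k := by ring
end

section
/- (Lemma 23-1, coflow-level total-cost bound with weight ratio R.) Assume the coflow-level dual data, let a ∈ {0,1} and R ≥ 1. Assume hypotheses (A'), (B'), (C') exactly as in Lemma 23, and replace (D) by (D_R): w_k ≤ R·( α_k + Σ_{i∈I} Σ_{k'=k}^n βI(i,k')·LI(i,k) + Σ_{j∈J} Σ_{k'=k}^n βJ(j,k')·LJ(j,k) ) for every k. Then Σ_k w_k·C_k ≤ R·(a + 2χ·m/κ)·Σ_k α_k·r_k + 2R·(aκ + 2χ·m)·( Σ_{i∈I} Σ_k βI(i,k)·FI(i,k) + Σ_{j∈J} Σ_k βJ(j,k)·FJ(j,k)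 ). -/
/-- Lemma 23-1 (coflow-level total-cost bound with weight ratio R). -/
theorem coflow_level_total_cost_bound_ratio
    -- coflow-level dual data
    (n : ℕ) (hn : 1 ≤ n)
    (I J : Type*) [Fintype I] [Fintype J] [Nonempty I] [Nonempty J]
    (m κ χ : ℝ) (hm : 2 ≤ m) (hκ : 0 < κ) (hχ : 1 ≤ χ)
    (w r C α DI DJ : Fin n → ℝ)
    (βI LI FI : I → Fin n → ℝ) (βJ LJ FJ : J → Fin n → ℝ)
    (hw : ∀ k, 0 ≤ w k) (hr : ∀ k, 0 ≤ r k) (hC : ∀ k, 0 ≤ C k)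
    (hα : ∀ k, 0 ≤ α k)
    (hβI : ∀ i k, 0 ≤ βI i k) (hβJ : ∀ j k, 0 ≤ βJ j k)
    (hLI : ∀ i k, 0 ≤ LI i k) (hLJ : ∀ j k, 0 ≤ LJ j k)
    (hDI : ∀ k, 0 ≤ DI k) (hDJ : ∀ k, 0 ≤ DJ k)
    (hFI : ∀ i k, 0 ≤ FI i k) (hFJ : ∀ j k, 0 ≤ FJ j k)
    (hDImono : Monotone DI) (hDJmono : Monotone DJ)
    (hcumI : ∀ i k, ∑ k' ∈ Finset.Iic k, LI i k' ≤ DI k)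
    (hcumJ : ∀ j k, ∑ k' ∈ Finset.Iic k, LJ j k' ≤ DJ k)
    (a R : ℝ) (ha : a = 0 ∨ a = 1) (hR : 1 ≤ R)
    -- (A') Observation 3 parts (5)–(7)
    (hA : ∀ k, 0 < α k →
      DI k ≤ m * r k / κ ∧ DJ k ≤ m * r k / κ ∧ ∀ k' ≤ k, r k' ≤ r k)
    -- (B') Observation 3 parts (1)–(4) and Observation 4
    (hBI : ∀ i k', 0 < βI i k' →
      (∀ ℓ ≤ k', r ℓ ≤ κ * DI k' / m) ∧
      (∀ k ≤ k', DI k + DJ k ≤ 2 * DI k') ∧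
      (DI k') ^ 2 ≤ 2 * m * FI i k')
    (hBJ : ∀ j k', 0 < βJ j k' →
      (∀ ℓ ≤ k', r ℓ ≤ κ * DJ k' / m) ∧
      (∀ k ≤ k', DI k + DJ k ≤ 2 * DJ k') ∧
      (DJ k') ^ 2 ≤ 2 * m * FJ j k')
    -- (C') completion-time bound of Lemma 21
    (hCb : ∀ k, C k ≤ a * (Finset.Iic k).sup' Finset.nonempty_Iic r
        + χ * (DI k + DJ k))
    -- (D_R) relaxed tightness, Lemma 21-1
    (hDR : ∀ k, w k ≤ R * (α k
        + ∑ i, ∑ k' ∈ Finset.Ici k, βI i k' * LI i k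
        + ∑ j, ∑ k' ∈ Finset.Ici k, βJ j k' * LJ j k)) :
    ∑ k, w k * C k
      ≤ R * (a + 2 * χ * m / κ) * ∑ k, α k * r k
        + 2 * R * (a * κ + 2 * χ * m) *
            (∑ i, ∑ k, βI i k * FI i k + ∑ j, ∑ k, βJ j k * FJ j k) := by
  have ha0 : (0:ℝ) ≤ a := by rcases ha with h | h <;> simp [h] <;> norm_num
  have hχ0 : (0:ℝ) ≤ χ := by linarith
  have hm0 : (0:ℝ) < m := by linarith
  have hR0 : (0:ℝ) ≤ R := by linarith
  set X : ℝ := a + 2 * χ * m / κ with hXdef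
  have hX0 : 0 ≤ X := by positivity
  -- step 1: the α-part
  have h1 : ∀ k, α k * C k ≤ X * (α k * r k) := by
    intro k
    rcases eq_or_lt_of_le (hα k) with h0 | hpos
    · rw [← h0]; simp
    · obtain ⟨hA1, hA2, hA3⟩ := hA k hpos
      have hCk : C k ≤ X * r k := by
        refine (hCb k).trans ?_
        have hs : (Finset.Iic k).sup' Finset.nonempty_Iic r ≤ r k := by
          apply Finset.sup'_le
          intro ℓ hℓ
          exact hA3 ℓ (Finset.mem_Iic.mp hℓ)
        have hd : DI k + DJ k ≤ m * r k / κ + m * r k / κ := add_le_add hA1 hA2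
        calc a * (Finset.Iic k).sup' Finset.nonempty_Iic r + χ * (DI k + DJ k)
            ≤ a * r k + χ * (m * r k / κ + m * r k / κ) :=
              add_le_add (mul_le_mul_of_nonneg_left hs ha0)
                (mul_le_mul_of_nonneg_left hd hχ0)
          _ = X * r k := by rw [hXdef]; ring
      calc α k * C k ≤ α k * (X * r k) := mul_le_mul_of_nonneg_left hCk hpos.le
        _ = X * (α k * r k) := by ring
  -- step 2: the β-parts
  have h2 : ∀ (i : I) (k' : Fin n),
      ∑ k ∈ Finset.Iic k', βI i k' * LI i k * C k
        ≤ 2 * (a * κ + 2 * χ * m) * (βI i k' * FI i k') := by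
    intro i k'
    rcases eq_or_lt_of_le (hβI i k') with h0 | hpos
    · rw [← h0]; simp
    · obtain ⟨hb1, hb2, hb3⟩ := hBI i k' hpos
      set B : ℝ := a * (κ * DI k' / m) + 2 * χ * DI k' with hBdef
      have hB0 : 0 ≤ B := by
        have := hDI k'
        positivity
      have hCB : ∀ k ≤ k', C k ≤ B := by
        intro k hk
        refine (hCb k).trans ?_
        have hs : (Finset.Iic k).sup' Finset.nonempty_Iic r ≤ κ * DI k' / m := by
          apply Finset.sup'_le
          intro ℓ hℓ
          exact hb1 ℓ (le_trans (Finset.mem_Iic.mp hℓ) hk)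
        have hd : DI k + DJ k ≤ 2 * DI k' := hb2 k hk
        calc a * (Finset.Iic k).sup' Finset.nonempty_Iic r + χ * (DI k + DJ k)
            ≤ a * (κ * DI k' / m) + χ * (2 * DI k') :=
              add_le_add (mul_le_mul_of_nonneg_left hs ha0)
                (mul_le_mul_of_nonneg_left hd hχ0)
          _ = B := by rw [hBdef]; ring
      have hsum : ∑ k ∈ Finset.Iic k', LI i k * C k ≤ DI k' * B := by
        calc ∑ k ∈ Finset.Iic k', LI i k * C k
            ≤ ∑ k ∈ Finset.Iic k', LI i k * B :=
              Finset.sum_le_sum fun k hk =>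
                mul_le_mul_of_nonneg_left (hCB k (Finset.mem_Iic.mp hk)) (hLI i k)
          _ = (∑ k ∈ Finset.Iic k', LI i k) * B := (Finset.sum_mul _ _ _).symm
          _ ≤ DI k' * B := mul_le_mul_of_nonneg_right (hcumI i k') hB0
      have key : DI k' * B ≤ 2 * (a * κ + 2 * χ * m) * FI i k' := by
        have e1 : DI k' * B = (a * κ / m + 2 * χ) * DI k' ^ 2 := by
          rw [hBdef]; field_simp
        have hc0 : 0 ≤ a * κ / m + 2 * χ := by positivity
        have e2 : (a * κ / m + 2 * χ) * (DI k' ^ 2)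
            ≤ (a * κ / m + 2 * χ) * (2 * m * FI i k') :=
          mul_le_mul_of_nonneg_left hb3 hc0
        have e3 : (a * κ / m + 2 * χ) * (2 * m * FI i k')
            = 2 * (a * κ + 2 * χ * m) * FI i k' := by
          field_simp
        exact e1.trans_le (e2.trans_eq e3)
      calc ∑ k ∈ Finset.Iic k', βI i k' * LI i k * C k
          = βI i k' * ∑ k ∈ Finset.Iic k', LI i k * C k := by
            rw [Finset.mul_sum]
            exact Finset.sum_congr rfl fun k _ => by ring
        _ ≤ βI i k' * (DI k' * B) := mul_le_mul_of_nonneg_left hsum hpos.le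
        _ ≤ βI i k' * (2 * (a * κ + 2 * χ * m) * FI i k') :=
            mul_le_mul_of_nonneg_left key hpos.le
        _ = 2 * (a * κ + 2 * χ * m) * (βI i k' * FI i k') := by ring
  have h3 : ∀ (j : J) (k' : Fin n),
      ∑ k ∈ Finset.Iic k', βJ j k' * LJ j k * C k
        ≤ 2 * (a * κ + 2 * χ * m) * (βJ j k' * FJ j k') := by
    intro j k'
    rcases eq_or_lt_of_le (hβJ j k') with h0 | hpos
    · rw [← h0]; simp
    · obtain ⟨hb1, hb2, hb3⟩ := hBJ j k' hpos
      set B : ℝ := a * (κ * DJ k' / m) + 2 * χ * DJ k' with hBdef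
      have hB0 : 0 ≤ B := by
        have := hDJ k'
        positivity
      have hCB : ∀ k ≤ k', C k ≤ B := by
        intro k hk
        refine (hCb k).trans ?_
        have hs : (Finset.Iic k).sup' Finset.nonempty_Iic r ≤ κ * DJ k' / m := by
          apply Finset.sup'_le
          intro ℓ hℓ
          exact hb1 ℓ (le_trans (Finset.mem_Iic.mp hℓ) hk)
        have hd : DI k + DJ k ≤ 2 * DJ k' := hb2 k hk
        calc a * (Finset.Iic k).sup' Finset.nonempty_Iic r + χ * (DI k + DJ k)
            ≤ a * (κ * DJ k' / m) + χ * (2 * DJ k') :=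
              add_le_add (mul_le_mul_of_nonneg_left hs ha0)
                (mul_le_mul_of_nonneg_left hd hχ0)
          _ = B := by rw [hBdef]; ring
      have hsum : ∑ k ∈ Finset.Iic k', LJ j k * C k ≤ DJ k' * B := by
        calc ∑ k ∈ Finset.Iic k', LJ j k * C k
            ≤ ∑ k ∈ Finset.Iic k', LJ j k * B :=
              Finset.sum_le_sum fun k hk =>
                mul_le_mul_of_nonneg_left (hCB k (Finset.mem_Iic.mp hk)) (hLJ j k)
          _ = (∑ k ∈ Finset.Iic k', LJ j k) * B := (Finset.sum_mul _ _ _).symm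
          _ ≤ DJ k' * B := mul_le_mul_of_nonneg_right (hcumJ j k') hB0
      have key : DJ k' * B ≤ 2 * (a * κ + 2 * χ * m) * FJ j k' := by
        have e1 : DJ k' * B = (a * κ / m + 2 * χ) * DJ k' ^ 2 := by
          rw [hBdef]; field_simp
        have hc0 : 0 ≤ a * κ / m + 2 * χ := by positivity
        have e2 : (a * κ / m + 2 * χ) * (DJ k' ^ 2)
            ≤ (a * κ / m + 2 * χ) * (2 * m * FJ j k') :=
          mul_le_mul_of_nonneg_left hb3 hc0
        have e3 : (a * κ / m + 2 * χ) * (2 * m * FJ j k')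
            = 2 * (a * κ + 2 * χ * m) * FJ j k' := by
          field_simp
        exact e1.trans_le (e2.trans_eq e3)
      calc ∑ k ∈ Finset.Iic k', βJ j k' * LJ j k * C k
          = βJ j k' * ∑ k ∈ Finset.Iic k', LJ j k * C k := by
            rw [Finset.mul_sum]
            exact Finset.sum_congr rfl fun k _ => by ring
        _ ≤ βJ j k' * (DJ k' * B) := mul_le_mul_of_nonneg_left hsum hpos.le
        _ ≤ βJ j k' * (2 * (a * κ + 2 * χ * m) * FJ j k') :=
            mul_le_mul_of_nonneg_left key hpos.le
        _ = 2 * (a * κ + 2 * χ * m) * (βJ j k' * FJ j k') := by ring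
  -- swapping sums in the β-parts
  have hswap : ∀ k k', (k ∈ (Finset.univ : Finset (Fin n)) ∧ k' ∈ Finset.Ici k)
      ↔ (k ∈ Finset.Iic k' ∧ k' ∈ (Finset.univ : Finset (Fin n))) := by
    intro k k'
    simp [Finset.mem_Ici, Finset.mem_Iic]
  have hTI : ∑ k, (∑ i, ∑ k' ∈ Finset.Ici k, βI i k' * LI i k) * C k
      = ∑ i, ∑ k', ∑ k ∈ Finset.Iic k', βI i k' * LI i k * C k := by
    calc ∑ k, (∑ i, ∑ k' ∈ Finset.Ici k, βI i k' * LI i k) * C k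
        = ∑ k, ∑ i, ∑ k' ∈ Finset.Ici k, βI i k' * LI i k * C k := by
          refine Finset.sum_congr rfl fun k _ => ?_
          rw [Finset.sum_mul]
          exact Finset.sum_congr rfl fun i _ => (Finset.sum_mul _ _ _)
      _ = ∑ i, ∑ k, ∑ k' ∈ Finset.Ici k, βI i k' * LI i k * C k := Finset.sum_comm
      _ = ∑ i, ∑ k', ∑ k ∈ Finset.Iic k', βI i k' * LI i k * C k := by
          refine Finset.sum_congr rfl fun i _ => ?_
          exact Finset.sum_comm' hswap
  have hTJ : ∑ k, (∑ j, ∑ k' ∈ Finset.Ici k, βJ j k' * LJ j k) * C k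
      = ∑ j, ∑ k', ∑ k ∈ Finset.Iic k', βJ j k' * LJ j k * C k := by
    calc ∑ k, (∑ j, ∑ k' ∈ Finset.Ici k, βJ j k' * LJ j k) * C k
        = ∑ k, ∑ j, ∑ k' ∈ Finset.Ici k, βJ j k' * LJ j k * C k := by
          refine Finset.sum_congr rfl fun k _ => ?_
          rw [Finset.sum_mul]
          exact Finset.sum_congr rfl fun j _ => (Finset.sum_mul _ _ _)
      _ = ∑ j, ∑ k, ∑ k' ∈ Finset.Ici k, βJ j k' * LJ j k * C k := Finset.sum_comm
      _ = ∑ j, ∑ k', ∑ k ∈ Finset.Iic k', βJ j k' * LJ j k * C k := by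
          refine Finset.sum_congr rfl fun j _ => ?_
          exact Finset.sum_comm' hswap
  -- bounds for the three pieces
  have hP1 : ∑ k, α k * C k ≤ X * ∑ k, α k * r k := by
    rw [Finset.mul_sum]
    exact Finset.sum_le_sum fun k _ => h1 k
  have hP2 : ∑ k, (∑ i, ∑ k' ∈ Finset.Ici k, βI i k' * LI i k) * C k
      ≤ 2 * (a * κ + 2 * χ * m) * ∑ i, ∑ k, βI i k * FI i k := by
    rw [hTI, Finset.mul_sum]
    refine Finset.sum_le_sum fun i _ => ?_
    rw [Finset.mul_sum]
    exact Finset.sum_le_sum fun k' _ => h2 i k'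
  have hP3 : ∑ k, (∑ j, ∑ k' ∈ Finset.Ici k, βJ j k' * LJ j k) * C k
      ≤ 2 * (a * κ + 2 * χ * m) * ∑ j, ∑ k, βJ j k * FJ j k := by
    rw [hTJ, Finset.mul_sum]
    refine Finset.sum_le_sum fun j _ => ?_
    rw [Finset.mul_sum]
    exact Finset.sum_le_sum fun k' _ => h3 j k'
  calc ∑ k, w k * C k
      ≤ ∑ k, (R * (α k
          + ∑ i, ∑ k' ∈ Finset.Ici k, βI i k' * LI i k
          + ∑ j, ∑ k' ∈ Finset.Ici k, βJ j k' * LJ j k)) * C k :=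
        Finset.sum_le_sum fun k _ => mul_le_mul_of_nonneg_right (hDR k) (hC k)
    _ = R * (∑ k, α k * C k
          + ∑ k, (∑ i, ∑ k' ∈ Finset.Ici k, βI i k' * LI i k) * C k
          + ∑ k, (∑ j, ∑ k' ∈ Finset.Ici k, βJ j k' * LJ j k) * C k) := by
        rw [← Finset.sum_add_distrib, ← Finset.sum_add_distrib, Finset.mul_sum]
        exact Finset.sum_congr rfl fun k _ => by ring
    _ ≤ R * (X * ∑ k, α k * r k
          + 2 * (a * κ + 2 * χ * m) * ∑ i, ∑ k, βI i k * FI i k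
          + 2 * (a * κ + 2 * χ * m) * ∑ j, ∑ k, βJ j k * FJ j k) := by
        apply mul_le_mul_of_nonneg_left _ hR0
        exact add_le_add (add_le_add hP1 hP2) hP3
    _ = R * X * ∑ k, α k * r k
          + 2 * R * (a * κ + 2 * χ * m) *
            (∑ i, ∑ k, βI i k * FI i k + ∑ j, ∑ k, βJ j k * FJ j k) := by ring
end

section
/- (Theorem 2, flow-level scheduling without release times.) Assume the flow-level dual data with κ = 1/2 and a = 0 (so the completion-time bound (C) reads C_k ≤ χ·(DI(k)+DJ(k))/m + (1−2/m)·C*_k), hypotheses (A), (B), (D) of Lemma 3, and the weak-duality bound (E): Σ_k α_k·r_k + Σ_{i∈I} Σ_k βI(i,k)·FI(i,k) + Σ_{j∈J} Σ_k βJ(j,k)·FJ(j,k) ≤ OPT. Then Σ_k w_k·C_k ≤ (4χ + 1 − 2/m)·OPT. -/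
lemma swap_Ici {n : ℕ} (f : Fin n → Fin n → ℝ) :
    ∑ k, ∑ k' ∈ Finset.Ici k, f k k' = ∑ k' : Fin n, ∑ k ∈ Finset.Iic k', f k k' := by
  have h1 : ∀ k : Fin n, Finset.Ici k = Finset.univ.filter (fun k' => k ≤ k') := by
    intro k; ext x; simp
  have h2 : ∀ k' : Fin n, Finset.Iic k' = Finset.univ.filter (fun k => k ≤ k') := by
    intro k; ext x; simp
  simp only [h1, h2, Finset.sum_filter]
  exact Finset.sum_comm

/-- Theorem 2 (flow-level scheduling without release times): approximation ratio 4χ + 1 − 2/m. -/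
theorem flow_level_without_release_times
    -- flow-level dual data
    (n : ℕ) (hn : 1 ≤ n)
    (I J : Type*) [Fintype I] [Fintype J] [Nonempty I] [Nonempty J]
    (m χ : ℝ) (hm : 2 ≤ m) (hχ : 1 ≤ χ)
    (w r C Cstar α DI DJ : Fin n → ℝ)
    (βI LI FI : I → Fin n → ℝ) (βJ LJ FJ : J → Fin n → ℝ)
    (hw : ∀ k, 0 ≤ w k) (hr : ∀ k, 0 ≤ r k) (hC : ∀ k, 0 ≤ C k)
    (hCstar : ∀ k, 0 ≤ Cstar k) (hα : ∀ k, 0 ≤ α k)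
    (hβI : ∀ i k, 0 ≤ βI i k) (hβJ : ∀ j k, 0 ≤ βJ j k)
    (hLI : ∀ i k, 0 ≤ LI i k) (hLJ : ∀ j k, 0 ≤ LJ j k)
    (hDI : ∀ k, 0 ≤ DI k) (hDJ : ∀ k, 0 ≤ DJ k)
    (hFI : ∀ i k, 0 ≤ FI i k) (hFJ : ∀ j k, 0 ≤ FJ j k)
    (hDImono : Monotone DI) (hDJmono : Monotone DJ)
    (hcumI : ∀ i k, ∑ k' ∈ Finset.Iic k, LI i k' ≤ DI k)
    (hcumJ : ∀ j k, ∑ k' ∈ Finset.Iic k, LJ j k' ≤ DJ k)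
    -- (A) with κ = 1/2
    (hA : ∀ k, 0 < α k →
      DI k ≤ 2 * m * r k ∧ DJ k ≤ 2 * m * r k ∧ ∀ k' ≤ k, r k' ≤ r k)
    -- (B) with κ = 1/2
    (hBI : ∀ i k', 0 < βI i k' →
      (∀ ℓ ≤ k', r ℓ ≤ DI k' / (2 * m)) ∧
      (∀ k ≤ k', DI k + DJ k ≤ 2 * DI k') ∧
      (DI k') ^ 2 ≤ 2 * m * FI i k')
    (hBJ : ∀ j k', 0 < βJ j k' →
      (∀ ℓ ≤ k', r ℓ ≤ DJ k' / (2 * m)) ∧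
      (∀ k ≤ k', DI k + DJ k ≤ 2 * DJ k') ∧
      (DJ k') ^ 2 ≤ 2 * m * FJ j k')
    -- (C) with a = 0
    (hCb : ∀ k, C k ≤ χ * (DI k + DJ k) / m + (1 - 2 / m) * Cstar k)
    -- (D) tightness of the dual constraints
    (hD : ∀ k, w k = α k
        + ∑ i, ∑ k' ∈ Finset.Ici k, βI i k' * LI i k
        + ∑ j, ∑ k' ∈ Finset.Ici k, βJ j k' * LJ j k)
    -- (E) weak duality
    (hE : ∑ k, α k * r k + ∑ i, ∑ k, βI i k * FI i k + ∑ j, ∑ k, βJ j k * FJ j k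
        ≤ ∑ k, w k * Cstar k) :
    ∑ k, w k * C k ≤ (4 * χ + 1 - 2 / m) * ∑ k, w k * Cstar k := by
  have hm0 : (0:ℝ) < m := lt_of_lt_of_le two_pos hm
  set OPT := ∑ k, w k * Cstar k with hOPT
  -- key bound: ∑ w_k (DI k + DJ k) ≤ 4 m OPT
  have key : ∑ k, w k * (DI k + DJ k) ≤ 4 * m * OPT := by
    have expand : ∑ k, w k * (DI k + DJ k)
        = (∑ k, α k * (DI k + DJ k))
        + (∑ k, ∑ i, ∑ k' ∈ Finset.Ici k, βI i k' * LI i k * (DI k + DJ k))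
        + (∑ k, ∑ j, ∑ k' ∈ Finset.Ici k, βJ j k' * LJ j k * (DI k + DJ k)) := by
      rw [← Finset.sum_add_distrib, ← Finset.sum_add_distrib]
      refine Finset.sum_congr rfl (fun k _ => ?_)
      rw [hD k]
      simp only [Finset.sum_mul, add_mul]
    have T1 : ∑ k, α k * (DI k + DJ k) ≤ 4 * m * ∑ k, α k * r k := by
      rw [Finset.mul_sum]
      refine Finset.sum_le_sum (fun k _ => ?_)
      rcases (hα k).eq_or_lt with h0 | hpos
      · rw [← h0]; simp
      · obtain ⟨h1, h2, _⟩ := hA k hpos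
        nlinarith [hα k]
    have TI : ∑ k, ∑ i, ∑ k' ∈ Finset.Ici k, βI i k' * LI i k * (DI k + DJ k)
        ≤ 4 * m * ∑ i, ∑ k, βI i k * FI i k := by
      rw [Finset.sum_comm]
      rw [Finset.mul_sum]
      refine Finset.sum_le_sum (fun i _ => ?_)
      rw [swap_Ici (fun k k' => βI i k' * LI i k * (DI k + DJ k)), Finset.mul_sum]
      refine Finset.sum_le_sum (fun k' _ => ?_)
      rcases (hβI i k').eq_or_lt with h0 | hpos
      · rw [← h0]; simp
      · obtain ⟨_, h2, h3⟩ := hBI i k' hpos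
        calc ∑ k ∈ Finset.Iic k', βI i k' * LI i k * (DI k + DJ k)
            ≤ ∑ k ∈ Finset.Iic k', (βI i k' * (2 * DI k')) * LI i k := by
              refine Finset.sum_le_sum (fun k hk => ?_)
              have := h2 k (Finset.mem_Iic.mp hk)
              nlinarith [mul_nonneg hpos.le (hLI i k), hDI k']
          _ = (βI i k' * (2 * DI k')) * ∑ k ∈ Finset.Iic k', LI i k := by
              rw [Finset.mul_sum]
          _ ≤ (βI i k' * (2 * DI k')) * DI k' := by
              exact mul_le_mul_of_nonneg_left (hcumI i k')
                (mul_nonneg (hβI i k') (by linarith [hDI k']))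
          _ = 2 * (βI i k' * (DI k') ^ 2) := by ring
          _ ≤ 2 * (βI i k' * (2 * m * FI i k')) := by
              have := mul_le_mul_of_nonneg_left h3 hpos.le
              linarith
          _ = 4 * m * (βI i k' * FI i k') := by ring
    have TJ : ∑ k, ∑ j, ∑ k' ∈ Finset.Ici k, βJ j k' * LJ j k * (DI k + DJ k)
        ≤ 4 * m * ∑ j, ∑ k, βJ j k * FJ j k := by
      rw [Finset.sum_comm]
      rw [Finset.mul_sum]
      refine Finset.sum_le_sum (fun j _ => ?_)
      rw [swap_Ici (fun k k' => βJ j k' * LJ j k * (DI k + DJ k)), Finset.mul_sum]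
      refine Finset.sum_le_sum (fun k' _ => ?_)
      rcases (hβJ j k').eq_or_lt with h0 | hpos
      · rw [← h0]; simp
      · obtain ⟨_, h2, h3⟩ := hBJ j k' hpos
        calc ∑ k ∈ Finset.Iic k', βJ j k' * LJ j k * (DI k + DJ k)
            ≤ ∑ k ∈ Finset.Iic k', (βJ j k' * (2 * DJ k')) * LJ j k := by
              refine Finset.sum_le_sum (fun k hk => ?_)
              have := h2 k (Finset.mem_Iic.mp hk)
              nlinarith [mul_nonneg hpos.le (hLJ j k), hDJ k']
          _ = (βJ j k' * (2 * DJ k')) * ∑ k ∈ Finset.Iic k', LJ j k := by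
              rw [Finset.mul_sum]
          _ ≤ (βJ j k' * (2 * DJ k')) * DJ k' := by
              exact mul_le_mul_of_nonneg_left (hcumJ j k')
                (mul_nonneg (hβJ j k') (by linarith [hDJ k']))
          _ = 2 * (βJ j k' * (DJ k') ^ 2) := by ring
          _ ≤ 2 * (βJ j k' * (2 * m * FJ j k')) := by
              have := mul_le_mul_of_nonneg_left h3 hpos.le
              linarith
          _ = 4 * m * (βJ j k' * FJ j k') := by ring
    have h4m : (0:ℝ) ≤ 4 * m := by linarith
    have := mul_le_mul_of_nonneg_left hE h4m
    rw [expand]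
    nlinarith [T1, TI, TJ]
  -- combine using (C)
  have step1 : ∑ k, w k * C k
      ≤ ∑ k, w k * (χ * (DI k + DJ k) / m + (1 - 2 / m) * Cstar k) :=
    Finset.sum_le_sum (fun k _ => mul_le_mul_of_nonneg_left (hCb k) (hw k))
  have step2 : ∑ k, w k * (χ * (DI k + DJ k) / m + (1 - 2 / m) * Cstar k)
      = (χ / m) * ∑ k, w k * (DI k + DJ k) + (1 - 2 / m) * OPT := by
    rw [hOPT, Finset.mul_sum, Finset.mul_sum, ← Finset.sum_add_distrib]
    refine Finset.sum_congr rfl (fun k _ => ?_)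
    field_simp
  have step3 : (χ / m) * ∑ k, w k * (DI k + DJ k) ≤ (χ / m) * (4 * m * OPT) := by
    refine mul_le_mul_of_nonneg_left key ?_
    positivity
  have step4 : (χ / m) * (4 * m * OPT) = 4 * χ * OPT := by
    field_simp
  calc ∑ k, w k * C k ≤ (χ / m) * ∑ k, w k * (DI k + DJ k) + (1 - 2 / m) * OPT := by
        rw [← step2]; exact step1
    _ ≤ 4 * χ * OPT + (1 - 2 / m) * OPT := by rw [← step4]; linarith
    _ = (4 * χ + 1 - 2 / m) * OPT := by ring
end

section
/- (Theorem 21, coflow-level scheduling with release times.) Assume the coflow-level dual data with κ = 1/2 and a = 1, hypotheses (A'), (B'), (C'), (D) of Lemma 23, and the weak-duality bound (E): Σ_k α_k·r_k + Σ_{i∈I} Σ_k βI(i,k)·FI(i,k) + Σ_{j∈J} Σ_k βJ(j,k)·FJ(j,k) ≤ OPT, where OPT ≥ 0 is the optimal total weighted completion time. Then Σ_k w_k·C_k ≤ (4χ·m + 1)·OPT. -/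
/-- Theorem 21 (coflow-level scheduling with release times): approximation ratio 4χm + 1. -/
theorem coflow_level_with_release_times
    -- coflow-level dual data
    (n : ℕ) (hn : 1 ≤ n)
    (I J : Type*) [Fintype I] [Fintype J] [Nonempty I] [Nonempty J]
    (m χ : ℝ) (hm : 2 ≤ m) (hχ : 1 ≤ χ)
    (w r C α DI DJ : Fin n → ℝ)
    (βI LI FI : I → Fin n → ℝ) (βJ LJ FJ : J → Fin n → ℝ)
    (hw : ∀ k, 0 ≤ w k) (hr : ∀ k, 0 ≤ r k) (hC : ∀ k, 0 ≤ C k)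
    (hα : ∀ k, 0 ≤ α k)
    (hβI : ∀ i k, 0 ≤ βI i k) (hβJ : ∀ j k, 0 ≤ βJ j k)
    (hLI : ∀ i k, 0 ≤ LI i k) (hLJ : ∀ j k, 0 ≤ LJ j k)
    (hDI : ∀ k, 0 ≤ DI k) (hDJ : ∀ k, 0 ≤ DJ k)
    (hFI : ∀ i k, 0 ≤ FI i k) (hFJ : ∀ j k, 0 ≤ FJ j k)
    (hDImono : Monotone DI) (hDJmono : Monotone DJ)
    (hcumI : ∀ i k, ∑ k' ∈ Finset.Iic k, LI i k' ≤ DI k)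
    (hcumJ : ∀ j k, ∑ k' ∈ Finset.Iic k, LJ j k' ≤ DJ k)
    (OPT : ℝ) (hOPT : 0 ≤ OPT)
    -- (A') with κ = 1/2
    (hA : ∀ k, 0 < α k →
      DI k ≤ 2 * m * r k ∧ DJ k ≤ 2 * m * r k ∧ ∀ k' ≤ k, r k' ≤ r k)
    -- (B') with κ = 1/2
    (hBI : ∀ i k', 0 < βI i k' →
      (∀ ℓ ≤ k', r ℓ ≤ DI k' / (2 * m)) ∧
      (∀ k ≤ k', DI k + DJ k ≤ 2 * DI k') ∧
      (DI k') ^ 2 ≤ 2 * m * FI i k')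
    (hBJ : ∀ j k', 0 < βJ j k' →
      (∀ ℓ ≤ k', r ℓ ≤ DJ k' / (2 * m)) ∧
      (∀ k ≤ k', DI k + DJ k ≤ 2 * DJ k') ∧
      (DJ k') ^ 2 ≤ 2 * m * FJ j k')
    -- (C') with a = 1
    (hCb : ∀ k, C k ≤ (Finset.Iic k).sup' Finset.nonempty_Iic r
        + χ * (DI k + DJ k))
    -- (D) tightness of the dual constraints
    (hD : ∀ k, w k = α k
        + ∑ i, ∑ k' ∈ Finset.Ici k, βI i k' * LI i k
        + ∑ j, ∑ k' ∈ Finset.Ici k, βJ j k' * LJ j k)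
    -- (E) weak duality
    (hE : ∑ k, α k * r k + ∑ i, ∑ k, βI i k * FI i k + ∑ j, ∑ k, βJ j k * FJ j k
        ≤ OPT) :
    ∑ k, w k * C k ≤ (4 * χ * m + 1) * OPT := by
  set K : ℝ := 4 * χ * m + 1 with hKdef
  have hm0 : (0:ℝ) < 2 * m := by linarith
  have hK : (0:ℝ) ≤ K := by nlinarith
  -- split the objective
  have hsplit : ∑ k, w k * C k
      = (∑ k, α k * C k)
      + (∑ i, ∑ k', βI i k' * ∑ k ∈ Finset.Iic k', LI i k * C k)
      + (∑ j, ∑ k', βJ j k' * ∑ k ∈ Finset.Iic k', LJ j k * C k) := by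
    have : ∑ k, w k * C k
        = ∑ k, (α k * C k
          + ∑ i, ∑ k' ∈ Finset.Ici k, βI i k' * (LI i k * C k)
          + ∑ j, ∑ k' ∈ Finset.Ici k, βJ j k' * (LJ j k * C k)) := by
      refine Finset.sum_congr rfl fun k _ => ?_
      rw [hD k]
      rw [add_mul, add_mul, Finset.sum_mul, Finset.sum_mul]
      congr 1
      · congr 1
        refine Finset.sum_congr rfl fun i _ => ?_
        rw [Finset.sum_mul]
        exact Finset.sum_congr rfl fun k' _ => by ring
      · refine Finset.sum_congr rfl fun j _ => ?_
        rw [Finset.sum_mul]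
        exact Finset.sum_congr rfl fun k' _ => by ring
    rw [this, Finset.sum_add_distrib, Finset.sum_add_distrib]
    congr 1
    · congr 1
      rw [Finset.sum_comm]
      refine Finset.sum_congr rfl fun i _ => ?_
      rw [Finset.sum_comm' (t' := Finset.univ) (s' := fun k' => Finset.Iic k')
        (by intro x y; simp [Finset.mem_Ici, Finset.mem_Iic])]
      exact Finset.sum_congr rfl fun k' _ => (Finset.mul_sum _ _ _).symm
    · rw [Finset.sum_comm]
      refine Finset.sum_congr rfl fun j _ => ?_
      rw [Finset.sum_comm' (t' := Finset.univ) (s' := fun k' => Finset.Iic k')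
        (by intro x y; simp [Finset.mem_Ici, Finset.mem_Iic])]
      exact Finset.sum_congr rfl fun k' _ => (Finset.mul_sum _ _ _).symm
  -- bound the α part
  have h1 : ∑ k, α k * C k ≤ K * ∑ k, α k * r k := by
    rw [Finset.mul_sum]
    refine Finset.sum_le_sum fun k _ => ?_
    rcases (hα k).lt_or_eq with hpos | hzero
    · obtain ⟨hDIk, hDJk, hrk⟩ := hA k hpos
      have hsup : (Finset.Iic k).sup' Finset.nonempty_Iic r ≤ r k :=
        Finset.sup'_le _ _ fun ℓ hℓ => hrk ℓ (Finset.mem_Iic.mp hℓ)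
      have hCk : C k ≤ K * r k := by
        have := hCb k
        nlinarith [hr k, hχ]
      calc α k * C k ≤ α k * (K * r k) := by
            exact mul_le_mul_of_nonneg_left hCk (le_of_lt hpos)
        _ = K * (α k * r k) := by ring
    · rw [← hzero]; simp
  -- bound the βI part
  have h2 : ∀ i (k' : Fin n), βI i k' * ∑ k ∈ Finset.Iic k', LI i k * C k
      ≤ K * (βI i k' * FI i k') := by
    intro i k'
    rcases (hβI i k').lt_or_eq with hpos | hzero
    · obtain ⟨hrb, hDb, hFb⟩ := hBI i k' hpos
      set B : ℝ := DI k' / (2 * m) + χ * (2 * DI k') with hBdef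
      have hB0 : 0 ≤ B := by
        have ha := div_nonneg (hDI k') hm0.le
        have hb : (0:ℝ) ≤ χ * (2 * DI k') :=
          mul_nonneg (by linarith) (by linarith [hDI k'])
        rw [hBdef]; linarith
      have hinner : ∑ k ∈ Finset.Iic k', LI i k * C k ≤ DI k' * B := by
        calc ∑ k ∈ Finset.Iic k', LI i k * C k
            ≤ ∑ k ∈ Finset.Iic k', LI i k * B := by
              refine Finset.sum_le_sum fun k hk => ?_
              have hk' : k ≤ k' := Finset.mem_Iic.mp hk
              have hsup : (Finset.Iic k).sup' Finset.nonempty_Iic r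
                  ≤ DI k' / (2 * m) :=
                Finset.sup'_le _ _ fun ℓ hℓ =>
                  hrb ℓ (le_trans (Finset.mem_Iic.mp hℓ) hk')
              have hCk : C k ≤ B := by
                have h1 := hCb k
                have h2 := hDb k hk'
                have : χ * (DI k + DJ k) ≤ χ * (2 * DI k') :=
                  mul_le_mul_of_nonneg_left h2 (by linarith)
                rw [hBdef]; linarith
              exact mul_le_mul_of_nonneg_left hCk (hLI i k)
          _ = (∑ k ∈ Finset.Iic k', LI i k) * B := by rw [Finset.sum_mul]
          _ ≤ DI k' * B := mul_le_mul_of_nonneg_right (hcumI i k') hB0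
      have hfin : DI k' * B ≤ K * FI i k' := by
        have hsq : DI k' * DI k' ≤ 2 * m * FI i k' := by nlinarith [hFb]
        have : DI k' * B = (DI k' * DI k') * (1 / (2 * m) + 2 * χ) := by
          rw [hBdef]; ring
        rw [this]
        have hc : (0:ℝ) ≤ 1 / (2 * m) + 2 * χ := by positivity
        calc (DI k' * DI k') * (1 / (2 * m) + 2 * χ)
            ≤ (2 * m * FI i k') * (1 / (2 * m) + 2 * χ) :=
              mul_le_mul_of_nonneg_right hsq hc
          _ = K * FI i k' := by field_simp [hKdef]; ring
      calc βI i k' * ∑ k ∈ Finset.Iic k', LI i k * C k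
          ≤ βI i k' * (DI k' * B) :=
            mul_le_mul_of_nonneg_left hinner (le_of_lt hpos)
        _ ≤ βI i k' * (K * FI i k') :=
            mul_le_mul_of_nonneg_left hfin (le_of_lt hpos)
        _ = K * (βI i k' * FI i k') := by ring
    · rw [← hzero]; simp
  have h3 : ∀ j (k' : Fin n), βJ j k' * ∑ k ∈ Finset.Iic k', LJ j k * C k
      ≤ K * (βJ j k' * FJ j k') := by
    intro j k'
    rcases (hβJ j k').lt_or_eq with hpos | hzero
    · obtain ⟨hrb, hDb, hFb⟩ := hBJ j k' hpos
      set B : ℝ := DJ k' / (2 * m) + χ * (2 * DJ k') with hBdef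
      have hB0 : 0 ≤ B := by
        have ha := div_nonneg (hDJ k') hm0.le
        have hb : (0:ℝ) ≤ χ * (2 * DJ k') :=
          mul_nonneg (by linarith) (by linarith [hDJ k'])
        rw [hBdef]; linarith
      have hinner : ∑ k ∈ Finset.Iic k', LJ j k * C k ≤ DJ k' * B := by
        calc ∑ k ∈ Finset.Iic k', LJ j k * C k
            ≤ ∑ k ∈ Finset.Iic k', LJ j k * B := by
              refine Finset.sum_le_sum fun k hk => ?_
              have hk' : k ≤ k' := Finset.mem_Iic.mp hk
              have hsup : (Finset.Iic k).sup' Finset.nonempty_Iic r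
                  ≤ DJ k' / (2 * m) :=
                Finset.sup'_le _ _ fun ℓ hℓ =>
                  hrb ℓ (le_trans (Finset.mem_Iic.mp hℓ) hk')
              have hCk : C k ≤ B := by
                have h1 := hCb k
                have h2 := hDb k hk'
                have : χ * (DI k + DJ k) ≤ χ * (2 * DJ k') :=
                  mul_le_mul_of_nonneg_left h2 (by linarith)
                rw [hBdef]; linarith
              exact mul_le_mul_of_nonneg_left hCk (hLJ j k)
          _ = (∑ k ∈ Finset.Iic k', LJ j k) * B := by rw [Finset.sum_mul]
          _ ≤ DJ k' * B := mul_le_mul_of_nonneg_right (hcumJ j k') hB0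
      have hfin : DJ k' * B ≤ K * FJ j k' := by
        have hsq : DJ k' * DJ k' ≤ 2 * m * FJ j k' := by nlinarith [hFb]
        have : DJ k' * B = (DJ k' * DJ k') * (1 / (2 * m) + 2 * χ) := by
          rw [hBdef]; ring
        rw [this]
        have hc : (0:ℝ) ≤ 1 / (2 * m) + 2 * χ := by positivity
        calc (DJ k' * DJ k') * (1 / (2 * m) + 2 * χ)
            ≤ (2 * m * FJ j k') * (1 / (2 * m) + 2 * χ) :=
              mul_le_mul_of_nonneg_right hsq hc
          _ = K * FJ j k' := by field_simp [hKdef]; ring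
      calc βJ j k' * ∑ k ∈ Finset.Iic k', LJ j k * C k
          ≤ βJ j k' * (DJ k' * B) :=
            mul_le_mul_of_nonneg_left hinner (le_of_lt hpos)
        _ ≤ βJ j k' * (K * FJ j k') :=
            mul_le_mul_of_nonneg_left hfin (le_of_lt hpos)
        _ = K * (βJ j k' * FJ j k') := by ring
    · rw [← hzero]; simp
  have h2' : ∑ i, ∑ k', βI i k' * ∑ k ∈ Finset.Iic k', LI i k * C k
      ≤ K * ∑ i, ∑ k, βI i k * FI i k := by
    rw [Finset.mul_sum]
    refine Finset.sum_le_sum fun i _ => ?_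
    rw [Finset.mul_sum]
    exact Finset.sum_le_sum fun k' _ => h2 i k'
  have h3' : ∑ j, ∑ k', βJ j k' * ∑ k ∈ Finset.Iic k', LJ j k * C k
      ≤ K * ∑ j, ∑ k, βJ j k * FJ j k := by
    rw [Finset.mul_sum]
    refine Finset.sum_le_sum fun j _ => ?_
    rw [Finset.mul_sum]
    exact Finset.sum_le_sum fun k' _ => h3 j k'
  calc ∑ k, w k * C k
      ≤ K * (∑ k, α k * r k + ∑ i, ∑ k, βI i k * FI i k
          + ∑ j, ∑ k, βJ j k * FJ j k) := by
        rw [hsplit, mul_add, mul_add]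
        exact add_le_add (add_le_add h1 h2') h3'
    _ ≤ K * OPT := mul_le_mul_of_nonneg_left hE hK
    _ = (4 * χ * m + 1) * OPT := by rw [hKdef]
end

section
/- (Theorem 21-1, coflow-level scheduling with release times and weight ratio R.) Assume the coflow-level dual data with κ = 1/2 and a = 1, a real R ≥ 1, hypotheses (A'), (B'), (C') of Lemma 23, the relaxed tightness (D_R): w_k ≤ R·( α_k + Σ_{i∈I} Σ_{k'=k}^n βI(i,k')·LI(i,k) + Σ_{j∈J} Σ_{k'=k}^n βJ(j,k')·LJ(j,k) ) for every k, and the weak-duality bound (E): Σ_k α_k·r_k + Σ_{i∈I} Σ_k βI(i,k)·FI(i,k) + Σ_{j∈J} Σ_k βJ(j,k)·FJ(j,k) ≤ OPT, where OPT ≥ 0 is the optimal total weighted completion time. Then Σ_k w_k·C_k ≤ (4Rχ·m + R)·OPT. -/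
/-!
Multiply the relaxed tightness (D_R) by `C k` and sum over `k`. Exchanging the order of summation
turns the right-hand side into `R` times the dual objective with `r k`, resp. `FI i k'` and
`FJ j k'`, replaced by a `C`-weighted quantity. Each of these is at most `1 + 4χm` times the
original one: for an active `α k`, (A') and (C') give `C k ≤ (1 + 4χm) r k`; for an active
`βI i k'`, (B') and (C') bound every `C k` with `k ≤ k'` by `DI k' (1/(2m) + 2χ)`, whence
`∑_{k ≤ k'} LI i k C k ≤ DI k'² (1/(2m) + 2χ) ≤ (1 + 4χm) FI i k'`. Weak duality (E) finishes.
-/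

open Finset

lemma mul_le_mul_of_pos_imp {α : Type*} [MulZeroClass α] [PartialOrder α] [PosMulMono α]
    {a x y : α} (ha : 0 ≤ a) (h : 0 < a → x ≤ y) :
    a * x ≤ a * y := by
  rcases ha.eq_or_lt with rfl | ha
  · simp
  · exact mul_le_mul_of_nonneg_left (h ha) ha.le

section Reindexing

variable {R ι P : Type*} [CommSemiring R] [Fintype ι] [Preorder ι]
  [LocallyFiniteOrderTop ι] [LocallyFiniteOrderBot ι]

lemma sum_sum_Ici_mul_eq_sum_mul_sum_Iic (b f : ι → R) :
    ∑ k, (∑ k' ∈ Ici k, b k') * f k = ∑ k', b k' * ∑ k ∈ Iic k', f k := by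
  simp_rw [sum_mul, mul_sum]
  exact sum_comm' fun k k' => by simp

lemma sum_sum_sum_Ici_mul_eq [Fintype P] (β L : P → ι → R) (C : ι → R) :
    ∑ k, (∑ p, ∑ k' ∈ Ici k, β p k' * L p k) * C k
      = ∑ p, ∑ k', β p k' * ∑ k ∈ Iic k', L p k * C k := by
  simp_rw [sum_mul, ← sum_sum_Ici_mul_eq_sum_mul_sum_Iic, sum_mul, mul_assoc]
  exact sum_comm

end Reindexing

section CompletionTimes

variable {ι : Type*} [Preorder ι] [LocallyFiniteOrderBot ι] {m χ : ℝ} {r C : ι → ℝ}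

lemma completion_le_of_alpha_pos (hχ : 0 ≤ χ) {k : ι} {DI DJ : ℝ}
    (hCb : C k ≤ (Iic k).sup' nonempty_Iic r + χ * (DI + DJ))
    (hA : DI ≤ 2 * m * r k ∧ DJ ≤ 2 * m * r k ∧ ∀ k' ≤ k, r k' ≤ r k) :
    C k ≤ (1 + 4 * χ * m) * r k := by
  obtain ⟨hDI, hDJ, hr⟩ := hA
  have hsup : (Iic k).sup' nonempty_Iic r ≤ r k :=
    sup'_le _ _ fun k' hk' => hr k' (mem_Iic.mp hk')
  linarith [mul_le_mul_of_nonneg_left (add_le_add hDI hDJ) hχ]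

lemma completion_le_of_beta_pos (hχ : 0 ≤ χ) {k k' : ι} (hk : k ≤ k') {D S : ℝ}
    (hCb : C k ≤ (Iic k).sup' nonempty_Iic r + χ * S)
    (hr : ∀ ℓ ≤ k', r ℓ ≤ D / (2 * m)) (hS : S ≤ 2 * D) :
    C k ≤ D * (1 / (2 * m) + 2 * χ) := by
  have hsup : (Iic k).sup' nonempty_Iic r ≤ D / (2 * m) :=
    sup'_le _ _ fun ℓ hℓ => hr ℓ ((mem_Iic.mp hℓ).trans hk)
  calc C k ≤ D / (2 * m) + χ * (2 * D) := by
        linarith [mul_le_mul_of_nonneg_left hS hχ]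
    _ = D * (1 / (2 * m) + 2 * χ) := by ring

lemma sum_mul_sum_Iic_le_of_beta_pos [Fintype ι] (hm : 0 < m) (hχ : 0 ≤ χ)
    {β L F D S : ι → ℝ} (hβ : ∀ k, 0 ≤ β k) (hL : ∀ k, 0 ≤ L k) (hD : ∀ k, 0 ≤ D k)
    (hcum : ∀ k, ∑ k' ∈ Iic k, L k' ≤ D k)
    (hB : ∀ k', 0 < β k' →
      (∀ ℓ ≤ k', r ℓ ≤ D k' / (2 * m)) ∧ (∀ k ≤ k', S k ≤ 2 * D k') ∧
      D k' ^ 2 ≤ 2 * m * F k')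
    (hCb : ∀ k, C k ≤ (Iic k).sup' nonempty_Iic r + χ * S k) :
    ∑ k', β k' * ∑ k ∈ Iic k', L k * C k ≤ (1 + 4 * χ * m) * ∑ k', β k' * F k' := by
  rw [mul_sum]
  refine sum_le_sum fun k' _ => ?_
  rw [mul_left_comm]
  refine mul_le_mul_of_pos_imp (hβ k') fun hpos => ?_
  obtain ⟨hr, hS, hF⟩ := hB k' hpos
  have hfactor : 0 ≤ D k' * (1 / (2 * m) + 2 * χ) := by have := hD k'; positivity
  calc ∑ k ∈ Iic k', L k * C k
      ≤ ∑ k ∈ Iic k', L k * (D k' * (1 / (2 * m) + 2 * χ)) :=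
        sum_le_sum fun k hk => mul_le_mul_of_nonneg_left
          (completion_le_of_beta_pos hχ (mem_Iic.mp hk) (hCb k) hr (hS k (mem_Iic.mp hk)))
          (hL k)
    _ = (∑ k ∈ Iic k', L k) * (D k' * (1 / (2 * m) + 2 * χ)) := by rw [sum_mul]
    _ ≤ D k' * (D k' * (1 / (2 * m) + 2 * χ)) := mul_le_mul_of_nonneg_right (hcum k') hfactor
    _ = (1 + 4 * χ * m) * (D k' ^ 2 / (2 * m)) := by field_simp; ring
    _ ≤ (1 + 4 * χ * m) * F k' := by
        gcongr
        rwa [div_le_iff₀ (by positivity), mul_comm]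

end CompletionTimes

theorem coflow_level_with_release_times_ratio_general
    -- coflow-level dual data
    (n : ℕ)
    (I J : Type*) [Fintype I] [Fintype J]
    (m χ : ℝ) (hm : 2 ≤ m) (hχ : 1 ≤ χ)
    (w r C α DI DJ : Fin n → ℝ)
    (βI LI FI : I → Fin n → ℝ) (βJ LJ FJ : J → Fin n → ℝ)
    (hC : ∀ k, 0 ≤ C k)
    (hα : ∀ k, 0 ≤ α k)
    (hβI : ∀ i k, 0 ≤ βI i k) (hβJ : ∀ j k, 0 ≤ βJ j k)
    (hLI : ∀ i k, 0 ≤ LI i k) (hLJ : ∀ j k, 0 ≤ LJ j k)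
    (hDI : ∀ k, 0 ≤ DI k) (hDJ : ∀ k, 0 ≤ DJ k)
    (hcumI : ∀ i k, ∑ k' ∈ Finset.Iic k, LI i k' ≤ DI k)
    (hcumJ : ∀ j k, ∑ k' ∈ Finset.Iic k, LJ j k' ≤ DJ k)
    (R : ℝ) (hR : 1 ≤ R)
    (OPT : ℝ)
    -- (A') with κ = 1/2
    (hA : ∀ k, 0 < α k →
      DI k ≤ 2 * m * r k ∧ DJ k ≤ 2 * m * r k ∧ ∀ k' ≤ k, r k' ≤ r k)
    -- (B') with κ = 1/2
    (hBI : ∀ i k', 0 < βI i k' →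
      (∀ ℓ ≤ k', r ℓ ≤ DI k' / (2 * m)) ∧
      (∀ k ≤ k', DI k + DJ k ≤ 2 * DI k') ∧
      (DI k') ^ 2 ≤ 2 * m * FI i k')
    (hBJ : ∀ j k', 0 < βJ j k' →
      (∀ ℓ ≤ k', r ℓ ≤ DJ k' / (2 * m)) ∧
      (∀ k ≤ k', DI k + DJ k ≤ 2 * DJ k') ∧
      (DJ k') ^ 2 ≤ 2 * m * FJ j k')
    -- (C') with a = 1
    (hCb : ∀ k, C k ≤ (Finset.Iic k).sup' Finset.nonempty_Iic r
        + χ * (DI k + DJ k))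
    -- (D_R) relaxed tightness, Lemma 21-1
    (hDR : ∀ k, w k ≤ R * (α k
        + ∑ i, ∑ k' ∈ Finset.Ici k, βI i k' * LI i k
        + ∑ j, ∑ k' ∈ Finset.Ici k, βJ j k' * LJ j k))
    -- (E) weak duality
    (hE : ∑ k, α k * r k + ∑ i, ∑ k, βI i k * FI i k + ∑ j, ∑ k, βJ j k * FJ j k
        ≤ OPT) :
    ∑ k, w k * C k ≤ (4 * R * χ * m + R) * OPT := by
  have hm0 : 0 < m := by linarith
  have hχ0 : 0 ≤ χ := by linarith
  have hK : 0 ≤ 1 + 4 * χ * m := by positivity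
  have hα_term : ∑ k, α k * C k ≤ (1 + 4 * χ * m) * ∑ k, α k * r k := by
    rw [mul_sum]
    refine sum_le_sum fun k _ => ?_
    rw [mul_left_comm]
    exact mul_le_mul_of_pos_imp (hα k) fun hpos =>
      completion_le_of_alpha_pos hχ0 (hCb k) (hA k hpos)
  have hI_term := sum_le_sum fun i (_ : i ∈ univ) =>
    sum_mul_sum_Iic_le_of_beta_pos hm0 hχ0 (hβI i) (hLI i) hDI (hcumI i) (hBI i) hCb
  have hJ_term := sum_le_sum fun j (_ : j ∈ univ) =>
    sum_mul_sum_Iic_le_of_beta_pos hm0 hχ0 (hβJ j) (hLJ j) hDJ (hcumJ j) (hBJ j) hCb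
  rw [← mul_sum] at hI_term hJ_term
  calc ∑ k, w k * C k
      ≤ ∑ k, R * (α k + ∑ i, ∑ k' ∈ Ici k, βI i k' * LI i k
          + ∑ j, ∑ k' ∈ Ici k, βJ j k' * LJ j k) * C k :=
        sum_le_sum fun k _ => mul_le_mul_of_nonneg_right (hDR k) (hC k)
    _ = R * (∑ k, α k * C k + ∑ i, ∑ k', βI i k' * ∑ k ∈ Iic k', LI i k * C k
          + ∑ j, ∑ k', βJ j k' * ∑ k ∈ Iic k', LJ j k * C k) := by
        rw [← sum_sum_sum_Ici_mul_eq, ← sum_sum_sum_Ici_mul_eq, ← sum_add_distrib,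
          ← sum_add_distrib, mul_sum]
        exact sum_congr rfl fun k _ => by ring
    _ ≤ R * ((1 + 4 * χ * m) * OPT) := by
        gcongr
        linarith [mul_le_mul_of_nonneg_left hE hK]
    _ = (4 * R * χ * m + R) * OPT := by ring

/-- Theorem 21-1 (coflow-level scheduling with release times, weight ratio R): ratio 4Rχm + R. -/
theorem coflow_level_with_release_times_ratio
    -- coflow-level dual data
    (n : ℕ) (hn : 1 ≤ n)
    (I J : Type*) [Fintype I] [Fintype J] [Nonempty I] [Nonempty J]
    (m χ : ℝ) (hm : 2 ≤ m) (hχ : 1 ≤ χ)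
    (w r C α DI DJ : Fin n → ℝ)
    (βI LI FI : I → Fin n → ℝ) (βJ LJ FJ : J → Fin n → ℝ)
    (hw : ∀ k, 0 ≤ w k) (hr : ∀ k, 0 ≤ r k) (hC : ∀ k, 0 ≤ C k)
    (hα : ∀ k, 0 ≤ α k)
    (hβI : ∀ i k, 0 ≤ βI i k) (hβJ : ∀ j k, 0 ≤ βJ j k)
    (hLI : ∀ i k, 0 ≤ LI i k) (hLJ : ∀ j k, 0 ≤ LJ j k)
    (hDI : ∀ k, 0 ≤ DI k) (hDJ : ∀ k, 0 ≤ DJ k)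
    (hFI : ∀ i k, 0 ≤ FI i k) (hFJ : ∀ j k, 0 ≤ FJ j k)
    (hDImono : Monotone DI) (hDJmono : Monotone DJ)
    (hcumI : ∀ i k, ∑ k' ∈ Finset.Iic k, LI i k' ≤ DI k)
    (hcumJ : ∀ j k, ∑ k' ∈ Finset.Iic k, LJ j k' ≤ DJ k)
    (R : ℝ) (hR : 1 ≤ R)
    (OPT : ℝ) (hOPT : 0 ≤ OPT)
    -- (A') with κ = 1/2
    (hA : ∀ k, 0 < α k →
      DI k ≤ 2 * m * r k ∧ DJ k ≤ 2 * m * r k ∧ ∀ k' ≤ k, r k' ≤ r k)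
    -- (B') with κ = 1/2
    (hBI : ∀ i k', 0 < βI i k' →
      (∀ ℓ ≤ k', r ℓ ≤ DI k' / (2 * m)) ∧
      (∀ k ≤ k', DI k + DJ k ≤ 2 * DI k') ∧
      (DI k') ^ 2 ≤ 2 * m * FI i k')
    (hBJ : ∀ j k', 0 < βJ j k' →
      (∀ ℓ ≤ k', r ℓ ≤ DJ k' / (2 * m)) ∧
      (∀ k ≤ k', DI k + DJ k ≤ 2 * DJ k') ∧
      (DJ k') ^ 2 ≤ 2 * m * FJ j k')
    -- (C') with a = 1
    (hCb : ∀ k, C k ≤ (Finset.Iic k).sup' Finset.nonempty_Iic r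
        + χ * (DI k + DJ k))
    -- (D_R) relaxed tightness, Lemma 21-1
    (hDR : ∀ k, w k ≤ R * (α k
        + ∑ i, ∑ k' ∈ Finset.Ici k, βI i k' * LI i k
        + ∑ j, ∑ k' ∈ Finset.Ici k, βJ j k' * LJ j k))
    -- (E) weak duality
    (hE : ∑ k, α k * r k + ∑ i, ∑ k, βI i k * FI i k + ∑ j, ∑ k, βJ j k * FJ j k
        ≤ OPT) :
    ∑ k, w k * C k ≤ (4 * R * χ * m + R) * OPT :=
  coflow_level_with_release_times_ratio_general n I J m χ hm hχ w r C α DI DJ βI LI FI βJ LJ FJ hC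
    hα hβI hβJ hLI hLJ hDI hDJ hcumI hcumJ R hR OPT hA hBI hBJ hCb hDR hE
end
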